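/- arXiv:math-ph/0604039 — 7 statements merged into one kernel-verified Lean document; each statement's English description precedes it below -/
import Mathlib

section
/- There exists a universal constant C > 0 such that for every a ∈ (0,2) ∪ (4,6) and every p ∈ [−π,π]³ with e(p) = a, one has s₁² + s₂² + s₃² > 0 and the Gauss curvature satisfies K(p) = M(p)/(s₁²+s₂²+s₃²)² ≥ C |||a|||². In particular, the level surface Σ_a = {p : e(p) = a} is uniformly convex for a ∈ (0,2) ∪ (4,6). -/
open Real

noncomputable section

/-- The dispersion relation `e(p) = ∑ (1 - cos pⱼ)`. -/
def e3 (p : Fin 3 → ℝ) : ℝ := ∑ i, (1 - Real.cos (p i))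

/-- `ssum p = s₁² + s₂² + s₃²`. -/
def ssum (p : Fin 3 → ℝ) : ℝ := ∑ i, Real.sin (p i) ^ 2

/-- `M(p) = s₁²c₂c₃ + s₂²c₁c₃ + s₃²c₁c₂`. -/
def Mf (p : Fin 3 → ℝ) : ℝ :=
  Real.sin (p 0) ^ 2 * Real.cos (p 1) * Real.cos (p 2) +
  Real.sin (p 1) ^ 2 * Real.cos (p 0) * Real.cos (p 2) +
  Real.sin (p 2) ^ 2 * Real.cos (p 0) * Real.cos (p 1)

/-- `|||α||| = min{|α|, |α−2|, |α−3|, |α−4|, |α−6|}.` -/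
def tri (α : ℝ) : ℝ := min |α| (min |α - 2| (min |α - 3| (min |α - 4| |α - 6|)))

lemma tri_nonneg (α : ℝ) : 0 ≤ tri α :=
  le_min (abs_nonneg _) (le_min (abs_nonneg _) (le_min (abs_nonneg _)
    (le_min (abs_nonneg _) (abs_nonneg _))))

lemma key (x y z : ℝ) (hx : 0 ≤ x) (hy : 0 ≤ y) (hz : 0 ≤ z) (h2 : x + y + z ≤ 2) :
    (1/4) * (x+y+z)^2 * (2-(x+y+z))^2 ≤
    x*(2-x)*(1-y)*(1-z) + y*(2-y)*(1-x)*(1-z) + z*(2-z)*(1-x)*(1-y) := by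
  nlinarith [sq_nonneg (x-y), sq_nonneg (y-z), sq_nonneg (x-z), mul_nonneg hx hy,
    mul_nonneg hy hz, mul_nonneg hx hz, mul_nonneg (mul_nonneg hx hy) hz,
    sq_nonneg (x+y+z), mul_nonneg (mul_nonneg hx hy) (sub_nonneg.2 h2),
    mul_nonneg (mul_nonneg hy hz) (sub_nonneg.2 h2),
    mul_nonneg (mul_nonneg hx hz) (sub_nonneg.2 h2),
    mul_nonneg hx (sub_nonneg.2 h2), mul_nonneg hy (sub_nonneg.2 h2),
    mul_nonneg hz (sub_nonneg.2 h2)]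

lemma alg (x y z t : ℝ) (hx : 0 ≤ x) (hy : 0 ≤ y) (hz : 0 ≤ z)
    (hs0 : 0 < x + y + z) (hs2 : x + y + z < 2)
    (ht0 : 0 ≤ t) (ht2 : t ≤ 2 - (x+y+z)) :
    0 < x*(2-x)+y*(2-y)+z*(2-z) ∧
    (1/16)*t^2 ≤ (x*(2-x)*(1-y)*(1-z)+y*(2-y)*(1-x)*(1-z)+z*(2-z)*(1-x)*(1-y)) /
      (x*(2-x)+y*(2-y)+z*(2-z))^2 := by
  have hS : 0 < x*(2-x)+y*(2-y)+z*(2-z) := by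
    nlinarith [mul_nonneg hx hy, mul_nonneg hy hz, mul_nonneg hx hz]
  refine ⟨hS, ?_⟩
  rw [le_div_iff₀ (by positivity)]
  have hkey := key x y z hx hy hz hs2.le
  have hSle : x*(2-x)+y*(2-y)+z*(2-z) ≤ 2*(x+y+z) := by
    nlinarith [sq_nonneg x, sq_nonneg y, sq_nonneg z]
  have hts : t * (x*(2-x)+y*(2-y)+z*(2-z)) ≤ (2-(x+y+z)) * (2*(x+y+z)) :=
    mul_le_mul ht2 hSle hS.le (by linarith)
  have htS0 : 0 ≤ t * (x*(2-x)+y*(2-y)+z*(2-z)) := mul_nonneg ht0 hS.le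
  have hsq : (t * (x*(2-x)+y*(2-y)+z*(2-z)))^2 ≤ ((2-(x+y+z)) * (2*(x+y+z)))^2 := by
    apply sq_le_sq' (by linarith [mul_nonneg (by linarith : (0:ℝ) ≤ 2-(x+y+z)) (by linarith : (0:ℝ) ≤ 2*(x+y+z))]) hts
  nlinarith [hsq, hkey]

/-- For `a ∈ (0,2) ∪ (4,6)` and `p ∈ [−π,π]³` with `e(p) = a`, one has
`s₁²+s₂²+s₃² > 0` and the Gauss curvature `K(p) = M(p)/(s₁²+s₂²+s₃²)² ≥ C |||a|||²`. -/
theorem stmt5 :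
    ∃ C : ℝ, 0 < C ∧ ∀ a : ℝ, a ∈ Set.Ioo (0:ℝ) 2 ∪ Set.Ioo (4:ℝ) 6 →
      ∀ p : Fin 3 → ℝ, (∀ i, |p i| ≤ π) → e3 p = a →
        0 < ssum p ∧ C * tri a ^ 2 ≤ Mf p / (ssum p) ^ 2 := by
  refine ⟨1/16, by norm_num, ?_⟩
  intro a ha p _ he
  have he' : (1 - Real.cos (p 0)) + (1 - Real.cos (p 1)) + (1 - Real.cos (p 2)) = a := by
    have := he; simp only [e3, Fin.sum_univ_three] at this; linarith
  rcases ha with ha | ha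
  · -- a ∈ (0,2): use x i = 1 - cos (p i)
    set x := 1 - Real.cos (p 0) with hx0
    set y := 1 - Real.cos (p 1) with hy0
    set z := 1 - Real.cos (p 2) with hz0
    have hx : 0 ≤ x := by have := Real.cos_le_one (p 0); linarith
    have hy : 0 ≤ y := by have := Real.cos_le_one (p 1); linarith
    have hz : 0 ≤ z := by have := Real.cos_le_one (p 2); linarith
    have hsum : x + y + z = a := he'
    have ht2 : tri a ≤ 2 - (x+y+z) := by
      have h1 : tri a ≤ |a - 2| :=
        (min_le_right _ _).trans (min_le_left _ _)
      rw [abs_of_nonpos (by linarith [ha.2] : a - 2 ≤ 0)] at h1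
      rw [hsum]; linarith
    obtain ⟨h1, h2⟩ := alg x y z (tri a) hx hy hz (by rw [hsum]; exact ha.1)
      (by rw [hsum]; exact ha.2) (tri_nonneg a) ht2
    have hss : ssum p = x*(2-x)+y*(2-y)+z*(2-z) := by
      simp only [ssum, Fin.sum_univ_three, Real.sin_sq, hx0, hy0, hz0]; ring
    have hM : Mf p = x*(2-x)*(1-y)*(1-z)+y*(2-y)*(1-x)*(1-z)+z*(2-z)*(1-x)*(1-y) := by
      simp only [Mf, Real.sin_sq, hx0, hy0, hz0]; ring_nf
    rw [hss, hM]
    exact ⟨h1, h2⟩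
  · -- a ∈ (4,6): use x i = 1 + cos (p i)
    set x := 1 + Real.cos (p 0) with hx0
    set y := 1 + Real.cos (p 1) with hy0
    set z := 1 + Real.cos (p 2) with hz0
    have hx : 0 ≤ x := by have := Real.neg_one_le_cos (p 0); linarith
    have hy : 0 ≤ y := by have := Real.neg_one_le_cos (p 1); linarith
    have hz : 0 ≤ z := by have := Real.neg_one_le_cos (p 2); linarith
    have hsum : x + y + z = 6 - a := by
      simp only [hx0, hy0, hz0]; linarith [he']
    have ht2 : tri a ≤ 2 - (x+y+z) := by
      have h1 : tri a ≤ |a - 4| :=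
        (min_le_right _ _).trans ((min_le_right _ _).trans
          ((min_le_right _ _).trans (min_le_left _ _)))
      rw [abs_of_nonneg (by linarith [ha.1] : (0:ℝ) ≤ a - 4)] at h1
      rw [hsum]; linarith
    obtain ⟨h1, h2⟩ := alg x y z (tri a) hx hy hz (by rw [hsum]; linarith [ha.2])
      (by rw [hsum]; linarith [ha.1]) (tri_nonneg a) ht2
    have hss : ssum p = x*(2-x)+y*(2-y)+z*(2-z) := by
      simp only [ssum, Fin.sum_univ_three, Real.sin_sq, hx0, hy0, hz0]; ring
    have hM : Mf p = x*(2-x)*(1-y)*(1-z)+y*(2-y)*(1-x)*(1-z)+z*(2-z)*(1-x)*(1-y) := by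
      simp only [Mf, Real.sin_sq, hx0, hy0, hz0]; ring_nf
    rw [hss, hM]
    exact ⟨h1, h2⟩
end
end

section
/- For every a ∈ (0,2) ∪ (2,4) ∪ (4,6), the normal map ν restricted to the level surface Σ_a = {p ∈ [−π,π)³ : e(p) = a} is surjective onto the unit sphere S²: for every unit vector ω ∈ ℝ³ there exists p with e(p) = a, sin²p₁ + sin²p₂ + sin²p₃ > 0, and ν(p) = ω. Moreover, for a ∈ (0,2) ∪ (4,6) the map ν : Σ_a → S² is bijective. -/
open Real

noncomputable section

/-- The normal map `ν(p) = (sin p₁, sin p₂, sin p₃)/(sin²p₁+sin²p₂+sin²p₃)^{1/2}`. -/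
def nuf (p : Fin 3 → ℝ) : Fin 3 → ℝ := fun i => Real.sin (p i) / Real.sqrt (ssum p)

/-- The fundamental domain `[−π,π)³` of the torus. -/
def box : Set (Fin 3 → ℝ) := {p | ∀ i, -π ≤ p i ∧ p i < π}

/-- The unit sphere `S²`. -/
def sph : Set (Fin 3 → ℝ) := {ω | ∑ i, ω i ^ 2 = 1}

/-!
A point `p` with `ν(p) = ω` is the same as `sin pⱼ = t ωⱼ` for some `t > 0`, and then
`cos² pⱼ = 1 - t² ωⱼ²`. All objects are symmetric under permuting coordinates, so let `|ω₀|` be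
maximal.

Surjectivity: let `p₀` run from `0` to `π` while `p₁, p₂` are kept on fixed branches of `arcsin`
so that the sines stay proportional to `ω`. At both ends all sines vanish, and `e` runs from `2k`
to `2k + 2`, where `k` counts the obtuse branches chosen; the intermediate value theorem gives
every `a` in between.

Injectivity: for `a < 2` (and for `a > 4`, after replacing every `cos pⱼ` by `-cos pⱼ`) we have
`∑ cos pⱼ > 1`, which forces `cos p₁, cos p₂ ≥ 0`. If also `cos p₀ ≥ 0`, every cosine decreases
in `t`. If `cos p₀ < 0`, the sum of cosines is strictly increasing in `t` as long as it exceeds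
`1`, and it stays below every value of the sum with all cosines nonnegative. Either way the level
`∑ cos pⱼ = 3 - a` determines the cosines, hence `t` and `p`.
-/

lemma sum_cos_eq_three_sub_e3 (p : Fin 3 → ℝ) : ∑ i, cos (p i) = 3 - e3 p := by
  simp [e3, Finset.sum_sub_distrib]

lemma sin_eq_sqrt_ssum_mul_nuf {p : Fin 3 → ℝ} (hp : 0 < ssum p) (i : Fin 3) :
    sin (p i) = √(ssum p) * nuf p i := by
  rw [nuf, mul_div_cancel₀ _ (Real.sqrt_pos.2 hp).ne']

lemma cos_sq_eq_one_sub_ssum_mul_nuf_sq {p : Fin 3 → ℝ} (hp : 0 < ssum p) (i : Fin 3) :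
    cos (p i) ^ 2 = 1 - ssum p * nuf p i ^ 2 := by
  rw [cos_sq', sin_eq_sqrt_ssum_mul_nuf hp, mul_pow, Real.sq_sqrt hp.le]

lemma nuf_mem_sph {p : Fin 3 → ℝ} (hp : 0 < ssum p) : nuf p ∈ sph := by
  simp only [sph, Set.mem_ofPred_eq, nuf, div_pow, Real.sq_sqrt hp.le, ← Finset.sum_div]
  exact div_self hp.ne'

lemma ssum_eq_and_nuf_eq {p ω : Fin 3 → ℝ} {t : ℝ} (ht : 0 < t)
    (hsin : ∀ i, sin (p i) = t * ω i) (hω : ω ∈ sph) : ssum p = t ^ 2 ∧ nuf p = ω := by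
  have hss : ssum p = t ^ 2 := by
    simp only [ssum, hsin, mul_pow, ← Finset.mul_sum]
    rw [hω, mul_one]
  refine ⟨hss, funext fun i => ?_⟩
  rw [nuf, hss, Real.sqrt_sq ht.le, hsin, mul_div_cancel_left₀ _ ht.ne']

lemma ssum_pos_of_e3_notMem {p : Fin 3 → ℝ} (hp : e3 p ∉ ({0, 2, 4, 6} : Set ℝ)) :
    0 < ssum p := by
  refine (Finset.sum_nonneg fun j _ => sq_nonneg (sin (p j))).lt_of_ne fun h => hp ?_
  have hsin : ∀ i, sin (p i) = 0 := fun i => by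
    have := (Finset.sum_eq_zero_iff_of_nonneg fun j _ => sq_nonneg (sin (p j))).1 h.symm i
      (Finset.mem_univ i)
    exact pow_eq_zero_iff two_ne_zero |>.1 this
  have hcos := fun i => Real.sin_eq_zero_iff_cos_eq.1 (hsin i)
  simp only [e3, Fin.sum_univ_three]
  rcases hcos 0 with h0 | h0 <;> rcases hcos 1 with h1 | h1 <;> rcases hcos 2 with h2 | h2 <;>
    · rw [h0, h1, h2]; norm_num

lemma eq_of_cos_eq_of_sin_eq {x y : ℝ} (hx : x ∈ Set.Ico (-π) π) (hy : y ∈ Set.Ico (-π) π)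
    (hc : cos x = cos y) (hs : sin x = sin y) : x = y := by
  have : Fact (0 < 2 * π) := ⟨two_pi_pos⟩
  have hπ : -π + 2 * π = π := by ring
  exact (AddCircle.coe_eq_coe_iff_of_mem_Ico (p := 2 * π) (a := -π) (by rwa [hπ])
    (by rwa [hπ])).1 (Real.Angle.cos_sin_inj hc hs)

section Symmetry

variable (p : Fin 3 → ℝ) (σ : Equiv.Perm (Fin 3))

lemma e3_comp_perm : e3 (p ∘ σ) = e3 p := Equiv.sum_comp σ fun i => 1 - cos (p i)

lemma ssum_comp_perm : ssum (p ∘ σ) = ssum p := Equiv.sum_comp σ fun i => sin (p i) ^ 2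

lemma nuf_comp_perm : nuf (p ∘ σ) = nuf p ∘ σ := by
  ext i
  simp only [nuf, ssum_comp_perm, Function.comp_apply]

lemma comp_perm_mem_sph {ω : Fin 3 → ℝ} (hω : ω ∈ sph) : ω ∘ σ ∈ sph :=
  (Equiv.sum_comp σ fun i => ω i ^ 2).trans hω

def toBox : Fin 3 → ℝ := fun i => toIcoMod two_pi_pos (-π) (p i)

lemma toBox_mem_box : toBox p ∈ box := fun i => by
  have := toIcoMod_mem_Ico two_pi_pos (-π) (p i)
  rwa [show -π + 2 * π = π by ring] at this

lemma sin_toBox (i : Fin 3) : sin (toBox p i) = sin (p i) :=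
  Real.sin_periodic.sub_zsmul_eq _

lemma cos_toBox (i : Fin 3) : cos (toBox p i) = cos (p i) :=
  Real.cos_periodic.sub_zsmul_eq _

lemma e3_toBox : e3 (toBox p) = e3 p := by simp only [e3, cos_toBox]

lemma ssum_toBox : ssum (toBox p) = ssum p := by simp only [ssum, sin_toBox]

lemma nuf_toBox : nuf (toBox p) = nuf p := by
  ext i
  simp only [nuf, ssum_toBox, sin_toBox]

end Symmetry

lemma exists_perm_le (c : Fin 3 → ℝ) : ∃ σ : Equiv.Perm (Fin 3), ∀ j, c (σ j) ≤ c (σ 0) := by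
  obtain ⟨i, hi⟩ := Finite.exists_max c
  exact ⟨Equiv.swap 0 i, fun j => by simpa using hi _⟩

def branchAngle (b : Bool) (x : ℝ) : ℝ := if b then π - arcsin x else arcsin x

lemma continuous_branchAngle (b : Bool) : Continuous (branchAngle b) := by
  cases b
  exacts [continuous_arcsin, continuous_const.sub continuous_arcsin]

lemma sin_branchAngle (b : Bool) {x : ℝ} (hx : |x| ≤ 1) : sin (branchAngle b x) = x := by
  obtain ⟨h₁, h₂⟩ := abs_le.1 hx
  cases b <;> simp [branchAngle, sin_arcsin h₁ h₂]

lemma cos_branchAngle_zero (b : Bool) : cos (branchAngle b 0) = 1 - 2 * b.toNat := by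
  cases b <;> norm_num [branchAngle]

def normalCurve (ω : Fin 3 → ℝ) (b₁ b₂ : Bool) (u : ℝ) : Fin 3 → ℝ :=
  ![if 0 ≤ ω 0 then u else -u, branchAngle b₁ (sin u / |ω 0| * ω 1),
    branchAngle b₂ (sin u / |ω 0| * ω 2)]

section NormalCurve

variable (ω : Fin 3 → ℝ) (b₁ b₂ : Bool)

lemma continuous_normalCurve : Continuous (normalCurve ω b₁ b₂) := by
  refine continuous_pi fun j => ?_
  fin_cases j
  · by_cases h : 0 ≤ ω 0 <;> simp [normalCurve, h] <;> fun_prop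
  · exact (continuous_branchAngle b₁).comp (by fun_prop)
  · exact (continuous_branchAngle b₂).comp (by fun_prop)

lemma e3_normalCurve_zero : e3 (normalCurve ω b₁ b₂ 0) = 2 * (b₁.toNat + b₂.toNat) := by
  simp [e3, normalCurve, Fin.sum_univ_three, cos_branchAngle_zero]
  ring

lemma e3_normalCurve_pi : e3 (normalCurve ω b₁ b₂ π) = 2 * (b₁.toNat + b₂.toNat) + 2 := by
  by_cases h : 0 ≤ ω 0 <;>
    simp [h, e3, normalCurve, Fin.sum_univ_three, cos_branchAngle_zero] <;> ring

lemma sin_normalCurve {ω : Fin 3 → ℝ} (hmax : ∀ j, ω j ^ 2 ≤ ω 0 ^ 2) (h₀ : ω 0 ≠ 0) (u : ℝ)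
    (j : Fin 3) : sin (normalCurve ω b₁ b₂ u j) = sin u / |ω 0| * ω j := by
  have hle : ∀ j, |sin u / |ω 0| * ω j| ≤ 1 := fun j => by
    rw [abs_mul, abs_div, abs_abs, div_mul_comm]
    exact mul_le_one₀ ((div_le_one (abs_pos.2 h₀)).2 (sq_le_sq.1 (hmax j))) (abs_nonneg _)
      (abs_sin_le_one u)
  fin_cases j
  · rcases le_or_gt 0 (ω 0) with h | h
    · simp [normalCurve, h, abs_of_nonneg h, h₀]
    · simp [normalCurve, h.not_ge, abs_of_neg h, div_neg, h₀]
  · exact sin_branchAngle b₁ (hle 1)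
  · exact sin_branchAngle b₂ (hle 2)

end NormalCurve

lemma exists_e3_eq_nuf_eq_of_sq_le {ω : Fin 3 → ℝ} (hω : ω ∈ sph)
    (hmax : ∀ j, ω j ^ 2 ≤ ω 0 ^ 2) (b₁ b₂ : Bool) {a : ℝ}
    (ha : a ∈ Set.Ioo (2 * (b₁.toNat + b₂.toNat : ℝ)) (2 * (b₁.toNat + b₂.toNat) + 2)) :
    ∃ p, e3 p = a ∧ 0 < ssum p ∧ nuf p = ω := by
  have h₀ : ω 0 ≠ 0 := by
    intro h
    have : ∀ j, ω j = 0 := by simpa [h] using hmax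
    simp [sph, this] at hω
  have hcont : Continuous fun u => e3 (normalCurve ω b₁ b₂ u) :=
    (by unfold e3; fun_prop : Continuous e3).comp (continuous_normalCurve ω b₁ b₂)
  obtain ⟨u, hu, hua⟩ := intermediate_value_Ioo pi_pos.le hcont.continuousOn
    (by rwa [e3_normalCurve_zero, e3_normalCurve_pi])
  have ht : 0 < sin u / |ω 0| := div_pos (sin_pos_of_pos_of_lt_pi hu.1 hu.2) (abs_pos.2 h₀)
  obtain ⟨hss, hnuf⟩ := ssum_eq_and_nuf_eq ht (sin_normalCurve b₁ b₂ hmax h₀ u) hω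
  exact ⟨_, hua, hss ▸ pow_pos ht 2, hnuf⟩

lemma exists_mem_box_e3_eq_nuf_eq {a : ℝ}
    (ha : a ∈ Set.Ioo (0:ℝ) 2 ∪ Set.Ioo (2:ℝ) 4 ∪ Set.Ioo (4:ℝ) 6) {ω : Fin 3 → ℝ}
    (hω : ω ∈ sph) : ∃ p ∈ box, e3 p = a ∧ 0 < ssum p ∧ nuf p = ω := by
  obtain ⟨b₁, b₂, hb⟩ : ∃ b₁ b₂ : Bool,
      a ∈ Set.Ioo (2 * (b₁.toNat + b₂.toNat : ℝ)) (2 * (b₁.toNat + b₂.toNat) + 2) := by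
    rcases ha with (ha | ha) | ha
    exacts [⟨false, false, by norm_num; exact ha⟩, ⟨true, false, by norm_num; exact ha⟩,
      ⟨true, true, by norm_num; exact ha⟩]
  obtain ⟨σ, hσ⟩ := exists_perm_le fun j => ω j ^ 2
  obtain ⟨q, hqa, hq, hqω⟩ :=
    exists_e3_eq_nuf_eq_of_sq_le (comp_perm_mem_sph σ hω) hσ b₁ b₂ hb
  refine ⟨toBox (q ∘ σ.symm), toBox_mem_box _, ?_, ?_, ?_⟩
  · rw [e3_toBox, e3_comp_perm, hqa]
  · rwa [ssum_toBox, ssum_comp_perm]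
  · rw [nuf_toBox, nuf_comp_perm, hqω, Function.comp_assoc, σ.self_comp_symm, Function.comp_id]

lemma strictMonoOn_Icc_of_deriv_pos_of_lt {f : ℝ → ℝ} {a b c : ℝ}
    (hf : ContinuousOn f (Set.Icc a b)) (hderiv : ∀ x ∈ Set.Ioo a b, c < f x → 0 < deriv f x)
    (ha : c < f a) : StrictMonoOn f (Set.Icc a b) := by
  have hmono : ∀ d ≤ b, (∀ x ∈ Set.Ioo a d, c < f x) → StrictMonoOn f (Set.Icc a d) :=
    fun d hd hgt => strictMonoOn_of_deriv_pos (convex_Icc a d)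
      (hf.mono (Set.Icc_subset_Icc_right hd)) fun x hx => by
        rw [interior_Icc] at hx
        exact hderiv x ⟨hx.1, hx.2.trans_le hd⟩ (hgt x hx)
  refine hmono b le_rfl fun x hx => ?_
  by_contra! hxc
  set K := Set.Icc a b ∩ f ⁻¹' Set.Iic c
  have hne : K.Nonempty := ⟨x, Set.Ioo_subset_Icc_self hx, hxc⟩
  have hK : sInf K ∈ K := (hf.preimage_isClosed_of_isClosed isClosed_Icc isClosed_Iic).csInf_mem
    hne ⟨a, fun y hy => hy.1.1⟩
  have ha_lt : a < sInf K := hK.1.1.lt_of_ne fun h => (h ▸ ha).not_ge hK.2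
  have hgt : ∀ y ∈ Set.Ioo a (sInf K), c < f y := fun y hy => by
    by_contra! hyc
    have hyK : y ∈ K := ⟨⟨hy.1.le, hy.2.le.trans hK.1.2⟩, hyc⟩
    exact (csInf_le ⟨a, fun z hz => hz.1.1⟩ hyK).not_gt hy.2
  have := hmono _ hK.1.2 hgt (Set.left_mem_Icc.2 ha_lt.le) (Set.right_mem_Icc.2 ha_lt.le) ha_lt
  exact (ha.trans this).not_ge hK.2

/-- `g s = s⁻¹ - s` is convex and decreasing with `g 1 = 0`, so
`g y + g z ≤ g 1 + g (y + z - 1) < g x`. -/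
lemma inv_sub_add_inv_sub_lt {x y z : ℝ} (hx : 0 < x) (hy : 0 < y) (hy₁ : y ≤ 1) (hz : 0 < z)
    (hz₁ : z ≤ 1) (h : 1 + x < y + z) : (y⁻¹ - y) + (z⁻¹ - z) < x⁻¹ - x := by
  have hnum : 0 < y * z * (1 - x ^ 2) - x * z * (1 - y ^ 2) - x * y * (1 - z ^ 2) := by
    nlinarith [mul_pos hy hz, mul_pos (mul_pos hx hy) hz,
      mul_nonneg (sub_nonneg.2 hy₁) (sub_nonneg.2 hz₁),
      mul_nonneg (mul_nonneg hx.le (sub_nonneg.2 hy₁)) (sub_nonneg.2 hz₁), sq_nonneg (y - z),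
      sq_nonneg (y + z - 1 - x)]
  have : x⁻¹ - x - ((y⁻¹ - y) + (z⁻¹ - z)) =
      (y * z * (1 - x ^ 2) - x * z * (1 - y ^ 2) - x * y * (1 - z ^ 2)) / (x * y * z) := by
    field_simp
    ring
  have := div_pos hnum (by positivity : 0 < x * y * z)
  linarith

/-- `∑ⱼ cos pⱼ` on the branch `cos p₀ ≤ 0 ≤ cos p₁, cos p₂`, when `cos² pⱼ = 1 - t cⱼ`. -/
def minusBranch (c : Fin 3 → ℝ) (t : ℝ) : ℝ :=
  -√(1 - t * c 0) + √(1 - t * c 1) + √(1 - t * c 2)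

lemma continuous_minusBranch (c : Fin 3 → ℝ) : Continuous (minusBranch c) := by
  unfold minusBranch; fun_prop

lemma hasDerivAt_sqrt_one_sub_mul (k : ℝ) {t : ℝ} (h : 1 - t * k ≠ 0) :
    HasDerivAt (fun s => √(1 - s * k)) (-k / (2 * √(1 - t * k))) t := by
  simpa using (((hasDerivAt_id t).mul_const k).const_sub 1).sqrt h

lemma deriv_minusBranch_pos {c : Fin 3 → ℝ} (hc₁ : 0 ≤ c 1) (hc₂ : 0 ≤ c 2) {t : ℝ}
    (ht : 0 < t) (htc : t * c 0 < 1) (h₁ : 1 < minusBranch c t) : 0 < deriv (minusBranch c) t := by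
  set B : Fin 3 → ℝ := fun j => √(1 - t * c j)
  have hB₀ : 0 < B 0 := Real.sqrt_pos.2 (by linarith)
  have hB₁ : B 1 ≤ 1 := Real.sqrt_le_one.2 (by nlinarith)
  have hB₂ : B 2 ≤ 1 := Real.sqrt_le_one.2 (by nlinarith)
  have hsum : 1 + B 0 < B 1 + B 2 := by simp only [minusBranch] at h₁; linarith
  have hpos : ∀ j, 0 < B j → 0 < 1 - t * c j := fun j hj => Real.sqrt_pos.1 hj
  have hc : ∀ j, 0 < B j → c j = (1 - B j ^ 2) / t := fun j hj => by
    rw [Real.sq_sqrt (hpos j hj).le]; field_simp; ring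
  have hB₁₀ : 0 < B 1 := by linarith
  have hB₂₀ : 0 < B 2 := by linarith
  have hd : HasDerivAt (minusBranch c)
      (-(-c 0 / (2 * B 0)) + -c 1 / (2 * B 1) + -c 2 / (2 * B 2)) t :=
    ((hasDerivAt_sqrt_one_sub_mul (c 0) (hpos 0 hB₀).ne').neg.add
      (hasDerivAt_sqrt_one_sub_mul (c 1) (hpos 1 hB₁₀).ne')).add
      (hasDerivAt_sqrt_one_sub_mul (c 2) (hpos 2 hB₂₀).ne')
  have hterm : ∀ j, 0 < B j → c j / (2 * B j) = ((B j)⁻¹ - B j) / (2 * t) := fun j hj => by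
    rw [hc j hj]; field_simp
  rw [hd.deriv, neg_div, neg_neg, neg_div, neg_div, hterm 0 hB₀, hterm 1 hB₁₀, hterm 2 hB₂₀]
  have := inv_sub_add_inv_sub_lt hB₀ hB₁₀ hB₁ hB₂₀ hB₂ hsum
  have h2t : 0 < 2 * t := by positivity
  rw [← sub_eq_add_neg, ← sub_eq_add_neg, ← sub_div, ← sub_div]
  exact div_pos (by linarith) h2t

lemma minusBranch_strictMonoOn {c : Fin 3 → ℝ} (hc₁ : 0 ≤ c 1) (hc₂ : 0 ≤ c 2) {s t : ℝ}
    (hs : 0 < s) (htc : t * c 0 ≤ 1) (h₁ : 1 < minusBranch c s) :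
    StrictMonoOn (minusBranch c) (Set.Icc s t) := by
  refine strictMonoOn_Icc_of_deriv_pos_of_lt (continuous_minusBranch c).continuousOn
    (fun x hx hgt => deriv_minusBranch_pos hc₁ hc₂ (hs.trans hx.1) ?_ hgt) h₁
  rcases le_or_gt (c 0) 0 with h | h <;> nlinarith [hx.1, hx.2]

lemma eq_of_minusBranch_eq {c : Fin 3 → ℝ} (hc₁ : 0 ≤ c 1) (hc₂ : 0 ≤ c 2) {s t : ℝ}
    (hs : 0 < s) (ht : 0 < t) (hsc : s * c 0 ≤ 1) (htc : t * c 0 ≤ 1)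
    (h₁ : 1 < minusBranch c s) (h : minusBranch c s = minusBranch c t) : s = t := by
  rcases lt_trichotomy s t with hst | hst | hst
  · exact absurd h (minusBranch_strictMonoOn hc₁ hc₂ hs htc h₁ (Set.left_mem_Icc.2 hst.le)
      (Set.right_mem_Icc.2 hst.le) hst).ne
  · exact hst
  · exact absurd h.symm (minusBranch_strictMonoOn hc₁ hc₂ ht hsc (h ▸ h₁)
      (Set.left_mem_Icc.2 hst.le) (Set.right_mem_Icc.2 hst.le) hst).ne

section CosineVectors

variable {c u v : Fin 3 → ℝ} {s t : ℝ}

lemma nonneg_of_one_lt_sum (hc : ∀ j, 0 ≤ c j) (hmax : ∀ j, c j ≤ c 0) (hs : 0 < s)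
    (hu : ∀ j, u j ^ 2 = 1 - s * c j) (h₁ : 1 < ∑ j, u j) : 0 ≤ u 1 ∧ 0 ≤ u 2 := by
  have hle : ∀ j, u j ≤ 1 := fun j =>
    le_of_sq_le_sq (by rw [hu j]; nlinarith [mul_nonneg hs.le (hc j)]) zero_le_one
  rw [Fin.sum_univ_three] at h₁
  constructor <;> by_contra! hneg
  · nlinarith [hu 0, hu 1, hle 0, hle 2, hmax 1]
  · nlinarith [hu 0, hu 2, hle 0, hle 1, hmax 2]

lemma sum_eq_minusBranch (hu : ∀ j, u j ^ 2 = 1 - s * c j) (hu₀ : u 0 < 0) (hu₁ : 0 ≤ u 1)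
    (hu₂ : 0 ≤ u 2) : ∑ j, u j = minusBranch c s := by
  rw [Fin.sum_univ_three, minusBranch, ← hu 0, ← hu 1, ← hu 2, Real.sqrt_sq hu₁,
    Real.sqrt_sq hu₂, Real.sqrt_sq_eq_abs, abs_of_neg hu₀, neg_neg]

lemma minusBranch_lt_sum (hc : ∀ j, 0 ≤ c j) (hs : 0 < s) (hsc : s * c 0 < 1)
    (hv : ∀ j, v j ^ 2 = 1 - t * c j) (hv₀ : ∀ j, 0 ≤ v j) (h₁ : 1 < minusBranch c s) :
    minusBranch c s < ∑ j, v j := by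
  have hc₀ : 0 < c 0 := by
    by_contra! h
    have h₀ : 1 ≤ √(1 - s * c 0) := Real.one_le_sqrt.2 (by nlinarith)
    have h₁' : √(1 - s * c 1) ≤ 1 := Real.sqrt_le_one.2 (by nlinarith [hc 1])
    have h₂' : √(1 - s * c 2) ≤ 1 := Real.sqrt_le_one.2 (by nlinarith [hc 2])
    simp only [minusBranch] at h₁
    linarith
  have htc : t * c 0 ≤ 1 := by nlinarith [hv 0, sq_nonneg (v 0)]
  set T := 1 / c 0
  have hTc : T * c 0 = 1 := one_div_mul_cancel hc₀.ne'
  have hsT : s < T := (lt_div_iff₀ hc₀).2 (by linarith)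
  have htT : t ≤ T := (le_div_iff₀ hc₀).2 htc
  have hle : ∀ j, √(1 - T * c j) ≤ v j := fun j => by
    rw [← Real.sqrt_sq (hv₀ j), hv j]
    exact Real.sqrt_le_sqrt (by nlinarith [hc j])
  calc minusBranch c s < minusBranch c T :=
        minusBranch_strictMonoOn (hc 1) (hc 2) hs hTc.le h₁ (Set.left_mem_Icc.2 hsT.le)
          (Set.right_mem_Icc.2 hsT.le) hsT
    _ ≤ v 1 + v 2 := by
        rw [minusBranch, hTc, sub_self, Real.sqrt_zero, neg_zero, zero_add]
        exact add_le_add (hle 1) (hle 2)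
    _ ≤ ∑ j, v j := by rw [Fin.sum_univ_three]; linarith [hv₀ 0]

lemma sum_ne_of_neg_of_nonneg (hc : ∀ j, 0 ≤ c j) (hs : 0 < s)
    (hu : ∀ j, u j ^ 2 = 1 - s * c j) (hv : ∀ j, v j ^ 2 = 1 - t * c j) (hu₀ : u 0 < 0)
    (hu₁ : 0 ≤ u 1) (hu₂ : 0 ≤ u 2) (hv₀ : 0 ≤ v 0) (hv₁ : 0 ≤ v 1) (hv₂ : 0 ≤ v 2)
    (h₁ : 1 < ∑ j, u j) : ∑ j, u j ≠ ∑ j, v j := by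
  rw [sum_eq_minusBranch hu hu₀ hu₁ hu₂] at h₁ ⊢
  refine (minusBranch_lt_sum hc hs (by nlinarith [hu 0]) hv (fun j => ?_) h₁).ne
  fin_cases j <;> assumption

lemma eq_of_sum_eq_of_nonneg_of_le (hst : s ≤ t) (hc : ∀ j, 0 ≤ c j)
    (hu : ∀ j, u j ^ 2 = 1 - s * c j) (hv : ∀ j, v j ^ 2 = 1 - t * c j) (hu₀ : ∀ j, 0 ≤ u j)
    (huv : ∑ j, u j = ∑ j, v j) : u = v := by
  have hle : ∀ j, v j ≤ u j := fun j =>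
    le_of_sq_le_sq (by rw [hu j, hv j]; nlinarith [hc j]) (hu₀ j)
  rw [Fin.sum_univ_three, Fin.sum_univ_three] at huv
  funext j
  fin_cases j <;> simp <;> linarith [hle 0, hle 1, hle 2]

lemma eq_of_sum_eq_of_forall_le (hc : ∀ j, 0 ≤ c j) (hmax : ∀ j, c j ≤ c 0) (hs : 0 < s)
    (ht : 0 < t) (hu : ∀ j, u j ^ 2 = 1 - s * c j) (hv : ∀ j, v j ^ 2 = 1 - t * c j)
    (h₁ : 1 < ∑ j, u j) (huv : ∑ j, u j = ∑ j, v j) : u = v := by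
  obtain ⟨hu₁, hu₂⟩ := nonneg_of_one_lt_sum hc hmax hs hu h₁
  obtain ⟨hv₁, hv₂⟩ := nonneg_of_one_lt_sum hc hmax ht hv (huv ▸ h₁)
  rcases lt_or_ge (u 0) 0 with hu₀ | hu₀ <;> rcases lt_or_ge (v 0) 0 with hv₀ | hv₀
  · have hsu := sum_eq_minusBranch hu hu₀ hu₁ hu₂
    have hsv := sum_eq_minusBranch hv hv₀ hv₁ hv₂
    have hst : s = t := eq_of_minusBranch_eq (hc 1) (hc 2) hs ht (by nlinarith [hu 0])
      (by nlinarith [hv 0]) (hsu ▸ h₁) (hsu ▸ hsv ▸ huv)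
    subst hst
    have hsq : ∀ j, u j ^ 2 = v j ^ 2 := fun j => (hu j).trans (hv j).symm
    funext j
    fin_cases j
    · exact neg_inj.1 ((sq_eq_sq₀ (by simp; linarith) (by simp; linarith)).1
        (by simpa using hsq 0))
    · exact (sq_eq_sq₀ hu₁ hv₁).1 (hsq 1)
    · exact (sq_eq_sq₀ hu₂ hv₂).1 (hsq 2)
  · exact absurd huv (sum_ne_of_neg_of_nonneg hc hs hu hv hu₀ hu₁ hu₂ hv₀ hv₁ hv₂ h₁)
  · exact absurd huv.symm
      (sum_ne_of_neg_of_nonneg hc ht hv hu hv₀ hv₁ hv₂ hu₀ hu₁ hu₂ (huv ▸ h₁))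
  · rcases le_total s t with h | h
    · exact eq_of_sum_eq_of_nonneg_of_le h hc hu hv (fun j => by fin_cases j <;> assumption) huv
    · exact (eq_of_sum_eq_of_nonneg_of_le h hc hv hu (fun j => by fin_cases j <;> assumption)
        huv.symm).symm

lemma eq_of_sum_eq_of_sq_eq (hc : ∀ j, 0 ≤ c j) (hs : 0 < s) (ht : 0 < t)
    (hu : ∀ j, u j ^ 2 = 1 - s * c j) (hv : ∀ j, v j ^ 2 = 1 - t * c j)
    (h₁ : 1 < ∑ j, u j) (huv : ∑ j, u j = ∑ j, v j) : u = v := by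
  obtain ⟨σ, hσ⟩ := exists_perm_le c
  have hsum : ∀ w : Fin 3 → ℝ, ∑ j, w (σ j) = ∑ j, w j := fun w => Equiv.sum_comp σ w
  have := eq_of_sum_eq_of_forall_le (c := c ∘ σ) (u := u ∘ σ) (v := v ∘ σ) (fun j => hc _) hσ
    hs ht (fun j => hu _) (fun j => hv _) ((hsum u).symm ▸ h₁)
    (by simp only [Function.comp_apply, hsum, huv])
  funext j
  simpa using congrFun this (σ.symm j)

end CosineVectors

lemma mapsTo_nuf {a : ℝ} (ha : a ∉ ({0, 2, 4, 6} : Set ℝ)) :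
    Set.MapsTo nuf {p ∈ box | e3 p = a} sph := fun _ hp =>
  nuf_mem_sph (ssum_pos_of_e3_notMem (hp.2 ▸ ha))

lemma injOn_nuf {a : ℝ} (ha₁ : 1 < |3 - a|) (ha : a ∉ ({0, 2, 4, 6} : Set ℝ)) :
    Set.InjOn nuf {p ∈ box | e3 p = a} := by
  rintro p ⟨hpb, hpa⟩ q ⟨hqb, hqa⟩ hpq
  have hp := ssum_pos_of_e3_notMem (hpa ▸ ha)
  have hq := ssum_pos_of_e3_notMem (hqa ▸ ha)
  obtain ⟨ε, hε, hεa⟩ : ∃ ε : ℝ, ε ^ 2 = 1 ∧ 1 < ε * (3 - a) := by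
    rcases lt_abs.1 ha₁ with h | h
    exacts [⟨1, by norm_num, by linarith⟩, ⟨-1, by norm_num, by linarith⟩]
  have hcos : ∀ j, cos (p j) = cos (q j) := by
    have := eq_of_sum_eq_of_sq_eq (c := fun j => nuf p j ^ 2) (u := fun j => ε * cos (p j))
      (v := fun j => ε * cos (q j)) (fun j => sq_nonneg _) hp hq
      (fun j => by rw [mul_pow, hε, one_mul, cos_sq_eq_one_sub_ssum_mul_nuf_sq hp])
      (fun j => by rw [mul_pow, hε, one_mul, cos_sq_eq_one_sub_ssum_mul_nuf_sq hq, hpq])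
      (by rwa [← Finset.mul_sum, sum_cos_eq_three_sub_e3, hpa])
      (by rw [← Finset.mul_sum, ← Finset.mul_sum, sum_cos_eq_three_sub_e3,
        sum_cos_eq_three_sub_e3, hpa, hqa])
    exact fun j => mul_left_cancel₀ (by rintro rfl; norm_num at hε) (congrFun this j)
  have hss : ssum p = ssum q := by simp only [ssum, sin_sq, hcos]
  funext j
  refine eq_of_cos_eq_of_sin_eq (hpb j) (hqb j) (hcos j) ?_
  rw [sin_eq_sqrt_ssum_mul_nuf hp, sin_eq_sqrt_ssum_mul_nuf hq, hss, hpq]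

/-- For `a ∈ (0,2) ∪ (2,4) ∪ (4,6)` the normal map `ν : Σ_a → S²` is surjective;
for `a ∈ (0,2) ∪ (4,6)` it is bijective. -/
theorem stmt7 (a : ℝ) :
    (a ∈ Set.Ioo (0:ℝ) 2 ∪ Set.Ioo (2:ℝ) 4 ∪ Set.Ioo (4:ℝ) 6 →
      ∀ ω ∈ sph, ∃ p ∈ box, e3 p = a ∧ 0 < ssum p ∧ nuf p = ω) ∧
    (a ∈ Set.Ioo (0:ℝ) 2 ∪ Set.Ioo (4:ℝ) 6 →
      Set.BijOn nuf {p ∈ box | e3 p = a} sph) := by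
  refine ⟨fun ha ω hω => exists_mem_box_e3_eq_nuf_eq ha hω, fun ha => ?_⟩
  have hne : a ∉ ({0, 2, 4, 6} : Set ℝ) := by
    rintro (rfl | rfl | rfl | rfl) <;> norm_num at ha
  have ha₁ : 1 < |3 - a| := by
    rcases ha with ⟨h₀, h₂⟩ | ⟨h₄, h₆⟩
    exacts [lt_abs.2 (Or.inl (by linarith)), lt_abs.2 (Or.inr (by linarith))]
  refine ⟨mapsTo_nuf hne, injOn_nuf ha₁ hne, fun ω hω => ?_⟩
  obtain ⟨p, hpb, hpa, -, hpω⟩ :=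
    exists_mem_box_e3_eq_nuf_eq (ha.elim (Or.inl ∘ Or.inl) Or.inr) hω
  exact ⟨p, ⟨hpb, hpa⟩, hpω⟩
end
end

section
/- For every a ∈ (2,4) and every unit vector ω ∈ S², the set of preimages { p ∈ [−π,π)³ : e(p) = a and ν(p) = ω } of the normal map on the level surface Σ_a is finite, of cardinality at most 64. -/
open Real

noncomputable section

/-- auxiliary: expansion of the product over all sign patterns. -/
def Ffun (b x1 x2 x3 : ℝ) : ℝ :=
  1*x3^4 - 4*x2*x3^3 + 6*x2^2*x3^2 - 4*x2^3*x3 + 1*x2^4 - 4*x1*x3^3 + 4*x1*x2*x3^2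
  + 4*x1*x2^2*x3 - 4*x1*x2^3 + 6*x1^2*x3^2 + 4*x1^2*x2*x3 + 6*x1^2*x2^2 - 4*x1^3*x3
  - 4*x1^3*x2 + 1*x1^4 - 4*b^2*x3^3 + 4*b^2*x2*x3^2 + 4*b^2*x2^2*x3 - 4*b^2*x2^3
  + 4*b^2*x1*x3^2 - 40*b^2*x1*x2*x3 + 4*b^2*x1*x2^2 + 4*b^2*x1^2*x3 + 4*b^2*x1^2*x2
  - 4*b^2*x1^3 + 6*b^4*x3^2 + 4*b^4*x2*x3 + 6*b^4*x2^2 + 4*b^4*x1*x3 + 4*b^4*x1*x2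
  + 6*b^4*x1^2 - 4*b^6*x3 - 4*b^6*x2 - 4*b^6*x1 + 1*b^8

lemma prod_eq_Ffun (b c1 c2 c3 x1 x2 x3 : ℝ)
    (h1 : c1^2 = x1) (h2 : c2^2 = x2) (h3 : c3^2 = x3) :
    (b - c1 - c2 - c3)*(b - c1 - c2 + c3)*(b - c1 + c2 - c3)*(b - c1 + c2 + c3)*
    (b + c1 - c2 - c3)*(b + c1 - c2 + c3)*(b + c1 + c2 - c3)*(b + c1 + c2 + c3)
    = Ffun b x1 x2 x3 := by
  subst h1 h2 h3; unfold Ffun; ring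

/-- coefficients of the quartic resultant polynomial in `t`. -/
def K0 (b : ℝ) : ℝ := 9 - 28*b^2 + 30*b^4 - 12*b^6 + 1*b^8
def K1 (b w1 w2 w3 : ℝ) : ℝ :=
  - 12*w3 - 12*w2 - 12*w1 + 28*b^2*w3 + 28*b^2*w2 + 28*b^2*w1 - 20*b^4*w3 - 20*b^4*w2
  - 20*b^4*w1 + 4*b^6*w3 + 4*b^6*w2 + 4*b^6*w1
def K2 (b w1 w2 w3 : ℝ) : ℝ :=
  - 2*w3^2 + 20*w2*w3 - 2*w2^2 + 20*w1*w3 + 20*w1*w2 - 2*w1^2 - 4*b^2*w3^2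
  - 24*b^2*w2*w3 - 4*b^2*w2^2 - 24*b^2*w1*w3 - 24*b^2*w1*w2 - 4*b^2*w1^2 + 6*b^4*w3^2
  + 4*b^4*w2*w3 + 6*b^4*w2^2 + 4*b^4*w1*w3 + 4*b^4*w1*w2 + 6*b^4*w1^2
def K3 (b w1 w2 w3 : ℝ) : ℝ :=
  4*w3^3 - 4*w2*w3^2 - 4*w2^2*w3 + 4*w2^3 - 4*w1*w3^2 - 24*w1*w2*w3 - 4*w1*w2^2
  - 4*w1^2*w3 - 4*w1^2*w2 + 4*w1^3 + 4*b^2*w3^3 - 4*b^2*w2*w3^2 - 4*b^2*w2^2*w3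
  + 4*b^2*w2^3 - 4*b^2*w1*w3^2 + 40*b^2*w1*w2*w3 - 4*b^2*w1*w2^2 - 4*b^2*w1^2*w3
  - 4*b^2*w1^2*w2 + 4*b^2*w1^3
def K4 (w1 w2 w3 : ℝ) : ℝ :=
  1*w3^4 - 4*w2*w3^3 + 6*w2^2*w3^2 - 4*w2^3*w3 + 1*w2^4 - 4*w1*w3^3 + 4*w1*w2*w3^2
  + 4*w1*w2^2*w3 - 4*w1*w2^3 + 6*w1^2*w3^2 + 4*w1^2*w2*w3 + 6*w1^2*w2^2 - 4*w1^3*w3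
  - 4*w1^3*w2 + 1*w1^4

open Polynomial in
/-- the quartic polynomial whose roots contain all possible values of `ssum p`. -/
def qpoly (b w1 w2 w3 : ℝ) : Polynomial ℝ :=
  C (K0 b) + C (K1 b w1 w2 w3) * X + C (K2 b w1 w2 w3) * X^2
    + C (K3 b w1 w2 w3) * X^3 + C (K4 w1 w2 w3) * X^4

open Polynomial in
lemma qpoly_eval (b w1 w2 w3 t : ℝ) :
    (qpoly b w1 w2 w3).eval t = Ffun b (1 - w1*t) (1 - w2*t) (1 - w3*t) := by
  unfold qpoly K0 K1 K2 K3 K4 Ffun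
  simp only [eval_add, eval_mul, eval_pow, eval_C, eval_X]
  ring

open Polynomial in
lemma qpoly_natDegree (b w1 w2 w3 : ℝ) : (qpoly b w1 w2 w3).natDegree ≤ 4 := by
  unfold qpoly; compute_degree

lemma qpoly_ne_zero (b w1 w2 w3 : ℝ) (hb : b^2 < 1) : qpoly b w1 w2 w3 ≠ 0 := by
  intro h
  have h0 : (qpoly b w1 w2 w3).eval 0 = 0 := by rw [h]; simp
  rw [qpoly_eval] at h0
  have : Ffun b (1 - w1*0) (1 - w2*0) (1 - w3*0) = (9 - b^2) * (1 - b^2)^3 := by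
    unfold Ffun; ring
  rw [this] at h0
  have h9 : (0:ℝ) < 9 - b^2 := by nlinarith
  have hx : (0:ℝ) < 1 - b^2 := by nlinarith
  have h1b : (0:ℝ) < (1 - b^2)^3 := pow_pos hx 3
  nlinarith

/-- Two points of `[-π, π)` with the same sine and cosine coincide. -/
lemma eq_of_sin_cos {x y : ℝ} (hx1 : -π ≤ x) (hx2 : x < π) (hy1 : -π ≤ y) (hy2 : y < π)
    (hs : Real.sin x = Real.sin y) (hc : Real.cos x = Real.cos y) : x = y := by
  have h1 : Real.cos (x - y) = 1 := by
    rw [Real.cos_sub, hs, hc]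
    nlinarith [Real.sin_sq_add_cos_sq y]
  have hπ : (0:ℝ) < π := Real.pi_pos
  have h2 : x - y = 0 := (Real.cos_eq_one_iff_of_lt_of_lt
    (by linarith) (by linarith)).mp h1
  linarith

/-- For `a ∈ (2,4)` and a unit vector `ω`, the set of preimages of `ω` under the normal
map on `Σ_a` is finite with at most 64 elements. -/
theorem stmt8 (a : ℝ) (ha : a ∈ Set.Ioo (2:ℝ) 4) (ω : Fin 3 → ℝ) (hω : ∑ i, ω i ^ 2 = 1) :
    ({p | p ∈ box ∧ e3 p = a ∧ 0 < ssum p ∧ nuf p = ω}).Finite ∧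
    ({p | p ∈ box ∧ e3 p = a ∧ 0 < ssum p ∧ nuf p = ω}).ncard ≤ 64 := by
  obtain ⟨ha2, ha4⟩ := ha
  set S : Set (Fin 3 → ℝ) := {p | p ∈ box ∧ e3 p = a ∧ 0 < ssum p ∧ nuf p = ω} with hS
  set b : ℝ := 3 - a with hbdef
  set w1 : ℝ := ω 0 ^ 2
  set w2 : ℝ := ω 1 ^ 2
  set w3 : ℝ := ω 2 ^ 2
  have hb2 : b ^ 2 < 1 := by rw [hbdef]; nlinarith
  set q : Polynomial ℝ := qpoly b w1 w2 w3 with hq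
  have hqne : q ≠ 0 := qpoly_ne_zero b w1 w2 w3 hb2
  -- basic facts about points of S
  have hsin : ∀ p ∈ S, ∀ i, Real.sin (p i) = ω i * Real.sqrt (ssum p) := by
    intro p hp i
    obtain ⟨_, _, hpos, hnu⟩ := hp
    have h := congrFun hnu i
    have hs : Real.sqrt (ssum p) ≠ 0 := ne_of_gt (Real.sqrt_pos.mpr hpos)
    rw [nuf] at h
    field_simp at h
    linarith [h]
  have hcos2 : ∀ p ∈ S, ∀ i, Real.cos (p i) ^ 2 = 1 - (ω i ^ 2) * ssum p := by
    intro p hp i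
    have h1 := hsin p hp i
    have h2 : Real.sin (p i) ^ 2 + Real.cos (p i) ^ 2 = 1 := Real.sin_sq_add_cos_sq _
    have h3 : Real.sqrt (ssum p) ^ 2 = ssum p := Real.sq_sqrt (le_of_lt hp.2.2.1)
    have h4 : Real.sin (p i) ^ 2 = ω i ^ 2 * ssum p := by
      rw [h1, mul_pow, h3]
    linarith
  have hroot : ∀ p ∈ S, q.IsRoot (ssum p) := by
    intro p hp
    have he : e3 p = a := hp.2.1
    set t := ssum p with ht
    have hc1 : Real.cos (p 0) ^ 2 = 1 - w1 * t := hcos2 p hp 0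
    have hc2 : Real.cos (p 1) ^ 2 = 1 - w2 * t := hcos2 p hp 1
    have hc3 : Real.cos (p 2) ^ 2 = 1 - w3 * t := hcos2 p hp 2
    have hsum : Real.cos (p 0) + Real.cos (p 1) + Real.cos (p 2) = b := by
      have : e3 p = a := he
      rw [e3, Fin.sum_univ_three] at this
      rw [hbdef]; linarith
    have hfac : b - Real.cos (p 0) - Real.cos (p 1) - Real.cos (p 2) = 0 := by linarith
    have hprod := prod_eq_Ffun b (Real.cos (p 0)) (Real.cos (p 1)) (Real.cos (p 2))
      (1 - w1*t) (1 - w2*t) (1 - w3*t) hc1 hc2 hc3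
    unfold Polynomial.IsRoot
    rw [hq, qpoly_eval, ← hprod, hfac]
    ring
  -- the injection
  set f : (Fin 3 → ℝ) → (Fin 3 → Bool) × ℝ :=
    fun p => (fun i => decide (0 ≤ Real.cos (p i)), ssum p) with hf
  have hinj : Set.InjOn f S := by
    intro p hp p' hp' hfe
    have hts : ssum p = ssum p' := congrArg Prod.snd hfe
    have hsg : ∀ i, (0 ≤ Real.cos (p i)) ↔ (0 ≤ Real.cos (p' i)) := by
      intro i
      have := congrFun (congrArg Prod.fst hfe) i
      simpa [hf] using this
    funext i
    have hsin1 := hsin p hp i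
    have hsin2 := hsin p' hp' i
    have hseq : Real.sin (p i) = Real.sin (p' i) := by rw [hsin1, hsin2, hts]
    have hc2eq : Real.cos (p i) ^ 2 = Real.cos (p' i) ^ 2 := by
      rw [hcos2 p hp i, hcos2 p' hp' i, hts]
    have hceq : Real.cos (p i) = Real.cos (p' i) := by
      have hmz : (Real.cos (p i) - Real.cos (p' i)) * (Real.cos (p i) + Real.cos (p' i)) = 0 := by
        linear_combination hc2eq
      rcases mul_eq_zero.mp hmz with h | h
      · linarith
      · rcases le_or_gt 0 (Real.cos (p' i)) with hh | hh
        · have := (hsg i).mpr hh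
          linarith
        · have h2 : ¬ (0 ≤ Real.cos (p i)) := fun hcc => hh.not_ge ((hsg i).mp hcc)
          push_neg at h2
          linarith
    obtain ⟨hx1, hx2⟩ := hp.1 i
    obtain ⟨hy1, hy2⟩ := hp'.1 i
    exact eq_of_sin_cos hx1 hx2 hy1 hy2 hseq hceq
  -- target finite set
  set T : Finset ((Fin 3 → Bool) × ℝ) := Finset.univ ×ˢ q.roots.toFinset with hT
  have himg : f '' S ⊆ ↑T := by
    rintro _ ⟨p, hp, rfl⟩
    simp only [hT, Finset.coe_product, Set.mem_prod, Set.mem_univ, true_and,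
      Finset.coe_univ, Multiset.mem_toFinset, Finset.mem_coe]
    exact Polynomial.mem_roots'.mpr ⟨hqne, hroot p hp⟩
  have hTfin : (↑T : Set ((Fin 3 → Bool) × ℝ)).Finite := T.finite_toSet
  have hfin : S.Finite := Set.Finite.of_finite_image (hTfin.subset himg) hinj
  refine ⟨hfin, ?_⟩
  have hcard1 : S.ncard = (f '' S).ncard := (Set.ncard_image_of_injOn hinj).symm
  have hcard2 : (f '' S).ncard ≤ (↑T : Set _).ncard := Set.ncard_le_ncard himg hTfin
  have hcard3 : (↑T : Set ((Fin 3 → Bool) × ℝ)).ncard = T.card := Set.ncard_coe_finset T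
  have hcard4 : T.card ≤ 64 := by
    rw [hT, Finset.card_product]
    have h8 : (Finset.univ : Finset (Fin 3 → Bool)).card = 8 := by
      simp [Finset.card_univ]
    have hroots : q.roots.toFinset.card ≤ 4 := by
      calc q.roots.toFinset.card ≤ Multiset.card q.roots := q.roots.toFinset_card_le
        _ ≤ q.natDegree := q.card_roots'
        _ ≤ 4 := qpoly_natDegree b w1 w2 w3
    calc (Finset.univ : Finset (Fin 3 → Bool)).card * q.roots.toFinset.card
        ≤ 8 * 4 := by rw [h8]; exact Nat.mul_le_mul_left 8 hroots
      _ ≤ 64 := by norm_num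
  omega
end
end

section
/- Let c₁, c₂, c₃ be nonzero real numbers and a ∈ ℝ satisfying: c₁ + c₂ + c₃ = 3 − a; 1/c₁ + 1/c₂ + 1/c₃ = 3 − a; and (1 − c₁⁴)c₂³c₃³ + (1 − c₂⁴)c₁³c₃³ + (1 − c₃⁴)c₁³c₂³ = 0. If in addition (c₁² − c₂²)(c₂² − c₃²)(c₃² − c₁²) = 0 (i.e. the Jacobian determinant |c₁²−c₂²|·|c₂²−c₃²|·|c₃²−c₁²| / |c₁c₂c₃| of the map Φ(c₁,c₂,c₃) = (c₁+c₂+c₃, 1/c₁+1/c₂+1/c₃, (1−c₁⁴)c₂³c₃³+(1−c₂⁴)c₁³c₃³+(1−c₃⁴)c₁³c₂³) vanishes on this solution set), then |||a||| = 0. Equivalently: for |||a||| ≠ 0 the Jacobian of Φ does not vanish on the solution set Φ(c₁,c₂,c₃) = (3−a, 3−a, 0). -/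
noncomputable section

/-!
A vanishing Jacobian means `cᵢ² = cⱼ²` for some `i ≠ j`; by symmetry of `Φ` take `c₁² = c₂²`.
If `c₁ = -c₂`, the first two equations say `c₃ = 1/c₃ = 3 - a`, so `c₃ = ±1`.
If `c₁ = c₂ = c` and `c₃ = d`, the second equation, cleared of denominators, reads
`2d(c² - 1) + c(d² - 1) = 0`; subtracting a multiple of it from the third leaves
`2c³d(c² - 1)(d² - c²) = 0`, and in each case `c² = d² = 1`. Either way `a = 3 - c₁ - c₂ - c₃`
is one of `0, 2, 4, 6`.
-/

lemma tri_eq_zero_of_mem {a : ℝ} (h : a = 0 ∨ a = 2 ∨ a = 4 ∨ a = 6) : tri a = 0 := by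
  rcases h with rfl | rfl | rfl | rfl <;> norm_num [tri]

lemma sq_eq_one_of_eq_inv {c : ℝ} (hc : c ≠ 0) (h : c = 1 / c) : c ^ 2 = 1 := by
  field_simp at h
  linear_combination h

lemma sq_eq_one_of_double_root {c d : ℝ} (hc : c ≠ 0) (hd : d ≠ 0)
    (hrec : 2 / c + 1 / d = 2 * c + d)
    (hcub : 2 * (1 - c ^ 4) * c ^ 3 * d ^ 3 + (1 - d ^ 4) * c ^ 6 = 0) :
    c ^ 2 = 1 ∧ d ^ 2 = 1 := by
  have hquad : 2 * d * (c ^ 2 - 1) + c * (d ^ 2 - 1) = 0 := by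
    field_simp at hrec
    linear_combination -hrec
  have hfactor : c ^ 3 * (2 * d * ((c ^ 2 - 1) * (d ^ 2 - c ^ 2))) = 0 := by
    linear_combination -hcub - c ^ 5 * (1 + d ^ 2) * hquad
  have hcases : c ^ 2 - 1 = 0 ∨ d ^ 2 - c ^ 2 = 0 := by
    simpa [hc, hd] using hfactor
  have hc2 : c ^ 2 = 1 := by
    rcases hcases with h | h
    · linarith
    rcases sq_eq_sq_iff_eq_or_eq_neg.mp (sub_eq_zero.mp h) with rfl | rfl
    · have : d * (3 * (d ^ 2 - 1)) = 0 := by linear_combination hquad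
      simpa [hd, sub_eq_zero] using this
    · have : c * (c ^ 2 - 1) = 0 := by linear_combination -hquad
      simpa [hc, sub_eq_zero] using this
  refine ⟨hc2, ?_⟩
  have : c * (d ^ 2 - 1) = 0 := by linear_combination hquad - 2 * d * hc2
  simpa [hc, sub_eq_zero] using this

lemma mem_of_sq_eq_sq {c1 c2 c3 a : ℝ} (h1 : c1 ≠ 0) (h3 : c3 ≠ 0)
    (hsum : c1 + c2 + c3 = 3 - a)
    (hrec : 1 / c1 + 1 / c2 + 1 / c3 = 3 - a)
    (hcub : (1 - c1 ^ 4) * c2 ^ 3 * c3 ^ 3 + (1 - c2 ^ 4) * c1 ^ 3 * c3 ^ 3 +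
        (1 - c3 ^ 4) * c1 ^ 3 * c2 ^ 3 = 0)
    (h12 : c1 ^ 2 = c2 ^ 2) :
    a = 0 ∨ a = 2 ∨ a = 4 ∨ a = 6 := by
  rcases sq_eq_sq_iff_eq_or_eq_neg.mp h12 with rfl | rfl
  · obtain ⟨hc, hd⟩ := sq_eq_one_of_double_root h1 h3 (by linear_combination hrec - hsum)
      (by linear_combination hcub)
    have ha : a = 3 - 2 * c1 - c3 := by linarith
    rcases sq_eq_one_iff.mp hc with hc | hc <;> rcases sq_eq_one_iff.mp hd with hd | hd <;>
      norm_num [ha, hc, hd]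
  · have hinv : c3 = 1 / c3 := by
      have : 1 / -c2 + 1 / c2 = 0 := by rw [one_div_neg_eq_neg_one_div]; ring
      linarith
    have ha : a = 3 - c3 := by linarith
    rcases sq_eq_one_iff.mp (sq_eq_one_of_eq_inv h3 hinv) with hc | hc <;> norm_num [ha, hc]

/-- If `c₁,c₂,c₃ ≠ 0` solve `Φ(c₁,c₂,c₃) = (3−a, 3−a, 0)` and the Jacobian of `Φ`
vanishes there (i.e. `(c₁²−c₂²)(c₂²−c₃²)(c₃²−c₁²) = 0`), then `|||a||| = 0`. -/
theorem stmt12 (c1 c2 c3 a : ℝ) (h1 : c1 ≠ 0) (h2 : c2 ≠ 0) (h3 : c3 ≠ 0)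
    (hsum : c1 + c2 + c3 = 3 - a)
    (hrec : 1 / c1 + 1 / c2 + 1 / c3 = 3 - a)
    (hcub : (1 - c1 ^ 4) * c2 ^ 3 * c3 ^ 3 + (1 - c2 ^ 4) * c1 ^ 3 * c3 ^ 3 +
        (1 - c3 ^ 4) * c1 ^ 3 * c2 ^ 3 = 0)
    (hjac : (c1 ^ 2 - c2 ^ 2) * (c2 ^ 2 - c3 ^ 2) * (c3 ^ 2 - c1 ^ 2) = 0) :
    tri a = 0 := by
  apply tri_eq_zero_of_mem
  simp only [mul_eq_zero, sub_eq_zero] at hjac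
  rcases hjac with (h12 | h23) | h31
  · exact mem_of_sq_eq_sq h1 h3 hsum hrec hcub h12
  · exact mem_of_sq_eq_sq h2 h1 (by linarith) (by linarith) (by linear_combination hcub) h23
  · exact mem_of_sq_eq_sq h3 h2 (by linarith) (by linarith) (by linear_combination hcub) h31
end
end

section
/- Let Λ ∈ (0, 1/2]. There exists a positive constant c_Λ such that for every p ∈ [−π,π]³ and every a ∈ [2+Λ, 4−Λ] with |a−3| ≥ Λ and c₁ + c₂ + c₃ = 3 − a, the following holds: if |M(p)| ≤ c_Λ then U(p) = |s₂s₃(c₂−c₃)| + |s₁s₃(c₃−c₁)| + |s₁s₂(c₁−c₂)| ≥ c_Λ. In particular, M and U have no common zero on { p : e(p) = a, |||a||| ≥ Λ }. -/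
open Real

noncomputable section

/-- `U(p) = |s₂s₃(c₂−c₃)| + |s₁s₃(c₃−c₁)| + |s₁s₂(c₁−c₂)|`. -/
def Uf (p : Fin 3 → ℝ) : ℝ :=
  |Real.sin (p 1) * Real.sin (p 2) * (Real.cos (p 1) - Real.cos (p 2))| +
  |Real.sin (p 0) * Real.sin (p 2) * (Real.cos (p 2) - Real.cos (p 0))| +
  |Real.sin (p 0) * Real.sin (p 1) * (Real.cos (p 0) - Real.cos (p 1))|

lemma Mf_cont : Continuous Mf := by
  unfold Mf; fun_prop

lemma Uf_cont : Continuous Uf := by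
  unfold Uf; fun_prop

/-- one cosine is ±1 case -/
lemma aux1 (x y z Λ : ℝ) (hx : x ^ 2 = 1) (hy : |y| ≤ 1) (hz : |z| ≤ 1)
    (hM : (1 - x ^ 2) * y * z + (1 - y ^ 2) * x * z + (1 - z ^ 2) * x * y = 0)
    (h2 : |x + y + z| ≤ 1 - Λ) (hΛ0 : 0 < Λ) : False := by
  have hy' := abs_le.mp hy
  have hz' := abs_le.mp hz
  have h2' := abs_le.mp h2
  have hM' : x * ((y + z) * (1 - y * z)) = 0 := by linear_combination hM + y * z * hx
  have hx0 : x ≠ 0 := by intro h; rw [h] at hx; norm_num at hx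
  have hcase : (y + z) = 0 ∨ 1 - y * z = 0 := by
    rcases mul_eq_zero.mp hM' with h | h
    · exact absurd h hx0
    · exact mul_eq_zero.mp h
  rcases hcase with h | h
  · nlinarith [h2'.1, h2'.2]
  · nlinarith [h2'.1, h2'.2, sq_nonneg (y - z), sq_nonneg (x * y + 1), sq_nonneg (x * z + 1),
      sq_nonneg (y + z), mul_self_nonneg (1 - y ^ 2), mul_self_nonneg (1 - z ^ 2)]

/-- Pure algebraic core. -/
lemma key' (Λ x y z sx sy sz : ℝ) (hΛ0 : 0 < Λ)
    (px : sx ^ 2 = 1 - x ^ 2) (py : sy ^ 2 = 1 - y ^ 2) (pz : sz ^ 2 = 1 - z ^ 2)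
    (hxb : |x| ≤ 1) (hyb : |y| ≤ 1) (hzb : |z| ≤ 1)
    (hM : (1 - x ^ 2) * y * z + (1 - y ^ 2) * x * z + (1 - z ^ 2) * x * y = 0)
    (t1 : sy * sz * (y - z) = 0) (t2 : sx * sz * (z - x) = 0) (t3 : sx * sy * (x - y) = 0)
    (h1 : Λ ≤ |x + y + z|) (h2 : |x + y + z| ≤ 1 - Λ) : False := by
  by_cases hsx : sx = 0
  · have hx1 : x ^ 2 = 1 := by rw [hsx] at px; nlinarith
    exact aux1 x y z Λ hx1 hyb hzb hM h2 hΛ0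
  by_cases hsy : sy = 0
  · have hy1 : y ^ 2 = 1 := by rw [hsy] at py; nlinarith
    refine aux1 y x z Λ hy1 hxb hzb (by linear_combination hM) ?_ hΛ0
    convert h2 using 2; ring
  by_cases hsz : sz = 0
  · have hz1 : z ^ 2 = 1 := by rw [hsz] at pz; nlinarith
    refine aux1 z x y Λ hz1 hxb hyb (by linear_combination hM) ?_ hΛ0
    convert h2 using 2; ring
  have hyz : y = z := by
    rcases mul_eq_zero.mp t1 with h | h
    · rcases mul_eq_zero.mp h with h' | h'
      · exact absurd h' hsy
      · exact absurd h' hsz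
    · linarith [sub_eq_zero.mp h]
  have hzx : z = x := by
    rcases mul_eq_zero.mp t2 with h | h
    · rcases mul_eq_zero.mp h with h' | h'
      · exact absurd h' hsx
      · exact absurd h' hsz
    · linarith [sub_eq_zero.mp h]
  subst hyz hzx
  have hMx : (1 - y ^ 2) * y ^ 2 = 0 := by linear_combination hM / 3
  rcases mul_eq_zero.mp hMx with h | h
  · have h2' := abs_le.mp h2
    nlinarith [h2'.1, h2'.2]
  · have hy0 : y = 0 := by
      have := sq_eq_zero_iff.mp h
      exact this
    rw [hy0] at h1
    norm_num at h1
    linarith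

/-- No common zero (quantitative version on the constrained set). -/
lemma key_s13 (Λ : ℝ) (hΛ0 : 0 < Λ) (p : Fin 3 → ℝ)
    (h1 : Λ ≤ |Real.cos (p 0) + Real.cos (p 1) + Real.cos (p 2)|)
    (h2 : |Real.cos (p 0) + Real.cos (p 1) + Real.cos (p 2)| ≤ 1 - Λ) :
    0 < |Mf p| + Uf p := by
  by_contra hcon
  push_neg at hcon
  have px := Real.sin_sq_add_cos_sq (p 0)
  have py := Real.sin_sq_add_cos_sq (p 1)
  have pz := Real.sin_sq_add_cos_sq (p 2)
  have hUnn : (0:ℝ) ≤ Uf p := by unfold Uf; positivity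
  have hMa : |Mf p| = 0 := le_antisymm (by linarith [abs_nonneg (Mf p)]) (abs_nonneg _)
  have hU0 : Uf p = 0 := le_antisymm (by linarith [abs_nonneg (Mf p)]) hUnn
  have hM0 : Mf p = 0 := abs_eq_zero.mp hMa
  unfold Mf at hM0
  unfold Uf at hU0
  have a1 := abs_nonneg (Real.sin (p 1) * Real.sin (p 2) * (Real.cos (p 1) - Real.cos (p 2)))
  have a2 := abs_nonneg (Real.sin (p 0) * Real.sin (p 2) * (Real.cos (p 2) - Real.cos (p 0)))
  have a3 := abs_nonneg (Real.sin (p 0) * Real.sin (p 1) * (Real.cos (p 0) - Real.cos (p 1)))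
  refine key' Λ (Real.cos (p 0)) (Real.cos (p 1)) (Real.cos (p 2))
    (Real.sin (p 0)) (Real.sin (p 1)) (Real.sin (p 2)) hΛ0
    (by linarith) (by linarith) (by linarith)
    (Real.abs_cos_le_one _) (Real.abs_cos_le_one _) (Real.abs_cos_le_one _)
    (by linear_combination hM0 - Real.cos (p 1) * Real.cos (p 2) * px
        - Real.cos (p 0) * Real.cos (p 2) * py - Real.cos (p 0) * Real.cos (p 1) * pz)
    (abs_eq_zero.mp (by linarith)) (abs_eq_zero.mp (by linarith)) (abs_eq_zero.mp (by linarith))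
    h1 h2

set_option maxHeartbeats 1000000 in
/-- For `a ∈ [2+Λ,4−Λ]` with `|a−3| ≥ Λ` and `p ∈ [−π,π]³` with `c₁+c₂+c₃ = 3−a`:
if `|M(p)| ≤ c_Λ` then `U(p) ≥ c_Λ`. -/
theorem stmt13 (Λ : ℝ) (hΛ0 : 0 < Λ) (hΛ : Λ ≤ 1/2) :
    ∃ c : ℝ, 0 < c ∧ ∀ p : Fin 3 → ℝ, (∀ i, |p i| ≤ π) →
      ∀ a ∈ Set.Icc (2 + Λ) (4 - Λ), Λ ≤ |a - 3| →
        Real.cos (p 0) + Real.cos (p 1) + Real.cos (p 2) = 3 - a →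
        |Mf p| ≤ c → c ≤ Uf p := by
  set g : (Fin 3 → ℝ) → ℝ :=
    fun p => |Real.cos (p 0) + Real.cos (p 1) + Real.cos (p 2)| with hg
  have hgcont : Continuous g := by unfold g; fun_prop
  set K : Set (Fin 3 → ℝ) :=
    (Set.univ.pi fun _ : Fin 3 => Set.Icc (-π) π) ∩ g ⁻¹' Set.Icc Λ (1 - Λ) with hK
  have hKcomp : IsCompact K :=
    (isCompact_univ_pi fun _ => isCompact_Icc).inter_right
      (isClosed_Icc.preimage hgcont)
  have hKne : K.Nonempty := by
    refine ⟨fun i => if i = 0 then Real.arccos Λ else π/2, ?_, ?_⟩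
    · intro i _
      dsimp only
      split <;>
        exact ⟨by linarith [Real.arccos_nonneg Λ, Real.pi_pos, Real.arccos_le_pi Λ],
          by linarith [Real.arccos_le_pi Λ, Real.pi_pos]⟩
    · rw [Set.mem_preimage, hg]
      have e : (fun p : Fin 3 → ℝ => |Real.cos (p 0) + Real.cos (p 1) + Real.cos (p 2)|)
          (fun i => if i = 0 then Real.arccos Λ else π/2) = Λ := by
        norm_num [show ((2:Fin 3) = 0) ↔ False by decide,
          show ((1:Fin 3) = 0) ↔ False by decide, Real.cos_pi_div_two,
          Real.cos_arccos (show (-1:ℝ) ≤ Λ by linarith) (show Λ ≤ 1 by linarith),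
          abs_of_pos hΛ0]
      rw [e]
      exact ⟨le_refl _, by linarith⟩
  have hfc : Continuous fun p => |Mf p| + Uf p := by
    exact (Mf_cont.abs).add Uf_cont
  obtain ⟨p₀, hp₀K, hp₀min⟩ := hKcomp.exists_isMinOn hKne hfc.continuousOn
  set m := |Mf p₀| + Uf p₀ with hm
  have hmpos : 0 < m := key_s13 Λ hΛ0 p₀ hp₀K.2.1 hp₀K.2.2
  refine ⟨m / 2, by linarith, ?_⟩
  intro p hp a ha haΛ hcos hMle
  have hpK : p ∈ K := by
    constructor
    · intro i _
      exact abs_le.mp (hp i)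
    · rw [Set.mem_preimage, hg]
      have hgp : (fun p : Fin 3 → ℝ => |Real.cos (p 0) + Real.cos (p 1) + Real.cos (p 2)|) p
          = |a - 3| := by
        simp only []
        rw [hcos, show (3:ℝ) - a = -(a - 3) by ring, abs_neg]
      rw [hgp]
      exact ⟨haΛ, abs_le.mpr ⟨by linarith [ha.1], by linarith [ha.2]⟩⟩
  have := hp₀min hpK
  simp only [Set.mem_setOf_eq] at this
  have h2 : m ≤ |Mf p| + Uf p := this
  linarith
end
end

section
/- Let I ⊂ ℝ be a compact interval and let g : I → ℝ³ be twice continuously differentiable with inf_I |g'| ≥ λ > 0. Then for every δ > 0 the one-dimensional Lebesgue measure of the set { q ∈ I : |g(q)| ≤ δ } is at most 8δλ^{−1} + 16|I| δ λ^{−2} max_I |g''|, where |I| is the length of I. -/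
/-!
If `g'` stays within `λ/2` of `v = g' a` on `[a, b]` and `λ ≤ ‖v‖`, then `t ↦ ⟪v, g t⟫` increases
at rate at least `λ‖v‖/2`, while on `{‖g‖ ≤ δ}` it is bounded by `‖v‖δ` in absolute value; so that
part of the sublevel set has diameter at most `4δ/λ`. Since `g'` is `M`-Lipschitz with
`M = max ‖g''‖`, cutting `I` into `N ≤ 2M|I|/λ + 1` pieces of equal length makes every piece this
short, and summing over the pieces gives the bound.
-/

open MeasureTheory

noncomputable section

abbrev E3 := EuclideanSpace ℝ (Fin 3)

open Set

open scoped RealInnerProductSpace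

theorem Real.volume_le_ofReal_of_forall_sub_le {s : Set ℝ} {d : ℝ}
    (h : ∀ x ∈ s, ∀ y ∈ s, x ≤ y → y - x ≤ d) : volume s ≤ ENNReal.ofReal d := by
  refine (Real.volume_le_diam s).trans (Metric.ediam_le fun x hx y hy => ?_)
  rw [edist_dist, Real.dist_eq]
  refine ENNReal.ofReal_le_ofReal ?_
  rcases le_total x y with hxy | hyx
  · rw [abs_sub_comm, abs_of_nonneg (sub_nonneg.2 hxy)]
    exact h x hx y hy hxy
  · rw [abs_of_nonneg (sub_nonneg.2 hyx)]
    exact h y hy x hx hyx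

theorem Set.Icc_subset_biUnion_Icc {X : Type*} [LinearOrder X] {N : ℕ} (hN : 0 < N)
    (a : ℕ → X) : Icc (a 0) (a N) ⊆ ⋃ i ∈ Finset.range N, Icc (a i) (a (i + 1)) := by
  induction N with
  | zero => exact absurd hN (lt_irrefl 0)
  | succ N ih =>
    rcases N.eq_zero_or_pos with rfl | hN
    · simp
    calc
      _ ⊆ Icc (a 0) (a N) ∪ Icc (a N) (a (N + 1)) := Icc_subset_Icc_union_Icc
      _ ⊆ _ := by simpa [Finset.range_add_one] using
                    union_subset_union_right (Icc (a N) (a (N + 1))) (ih hN)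

theorem measure_sep_Icc_le_of_partition {X : Type*} [LinearOrder X] [MeasurableSpace X]
    (μ : Measure X) (p : X → Prop) {N : ℕ} (hN : 0 < N) (a : ℕ → X) {ε : ENNReal}
    (h : ∀ i < N, μ {x ∈ Icc (a i) (a (i + 1)) | p x} ≤ ε) :
    μ {x ∈ Icc (a 0) (a N) | p x} ≤ N * ε := calc
  _ ≤ μ (⋃ i ∈ Finset.range N, {x ∈ Icc (a i) (a (i + 1)) | p x}) := by
    refine measure_mono fun x ⟨hx, hpx⟩ => ?_
    obtain ⟨i, hi, hxi⟩ := mem_iUnion₂.1 (Icc_subset_biUnion_Icc hN a hx)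
    exact mem_biUnion hi ⟨hxi, hpx⟩
  _ ≤ ∑ i ∈ Finset.range N, μ {x ∈ Icc (a i) (a (i + 1)) | p x} := measure_biUnion_finset_le _ _
  _ ≤ ∑ _i ∈ Finset.range N, ε := Finset.sum_le_sum fun i hi => h i (Finset.mem_range.1 hi)
  _ = N * ε := by simp

variable {E : Type*} [NormedAddCommGroup E] [InnerProductSpace ℝ E]

theorem le_inner_of_norm_sub_le {v w : E} {lam : ℝ} (hv : lam ≤ ‖v‖) (hw : ‖w - v‖ ≤ lam / 2) :
    lam * ‖v‖ / 2 ≤ ⟪v, w⟫ := by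
  have hsplit : ⟪v, w⟫ = ‖v‖ ^ 2 + ⟪v, w - v⟫ := by
    rw [inner_sub_right, real_inner_self_eq_norm_sq]; ring
  have hcs : -(‖v‖ * (lam / 2)) ≤ ⟪v, w - v⟫ :=
    (neg_le_neg (mul_le_mul_of_nonneg_left hw (norm_nonneg v))).trans
      (neg_le_of_abs_le (abs_real_inner_le_norm v (w - v)))
  nlinarith [norm_nonneg v]

theorem mul_sub_le_inner_sub_of_le_inner_deriv {f f' : ℝ → E} {a b c : ℝ} (v : E)
    (hf : ∀ t ∈ Icc a b, HasDerivWithinAt f (f' t) (Icc a b) t)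
    (hc : ∀ t ∈ Icc a b, c ≤ ⟪v, f' t⟫) {p q : ℝ} (hp : p ∈ Icc a b) (hq : q ∈ Icc a b)
    (hpq : p ≤ q) : c * (q - p) ≤ ⟪v, f q⟫ - ⟪v, f p⟫ := by
  have hderiv : ∀ t ∈ Icc a b,
      HasDerivWithinAt (fun t => ⟪v, f t⟫ - c * t) (⟪v, f' t⟫ - c) (Icc a b) t := fun t ht =>
    ((innerSL ℝ v).hasFDerivAt.comp_hasDerivWithinAt t (hf t ht)).sub
      ((hasDerivWithinAt_id t _).const_mul c |>.congr_deriv (mul_one c))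
  have hmono : MonotoneOn (fun t => ⟪v, f t⟫ - c * t) (Icc a b) :=
    monotoneOn_of_hasDerivWithinAt_nonneg (convex_Icc a b)
      (fun t ht => (hderiv t ht).continuousWithinAt)
      (fun t ht => (hderiv t (interior_subset ht)).mono interior_subset)
      (fun t ht => sub_nonneg.2 (hc t (interior_subset ht)))
  linarith [hmono hp hq hpq]

theorem volume_sublevel_le_of_le_inner_deriv {f f' : ℝ → E} {a b c δ : ℝ} (v : E) (hc : 0 < c)
    (hf : ∀ t ∈ Icc a b, HasDerivWithinAt f (f' t) (Icc a b) t)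
    (hv : ∀ t ∈ Icc a b, c ≤ ⟪v, f' t⟫) :
    volume {t ∈ Icc a b | ‖f t‖ ≤ δ} ≤ ENNReal.ofReal (2 * ‖v‖ * δ / c) := by
  refine Real.volume_le_ofReal_of_forall_sub_le fun p ⟨hp, hfp⟩ q ⟨hq, hfq⟩ hpq => ?_
  have hinc := mul_sub_le_inner_sub_of_le_inner_deriv v hf hv hp hq hpq
  have hbound : ∀ t, ‖f t‖ ≤ δ → |⟪v, f t⟫| ≤ ‖v‖ * δ := fun t ht =>
    (abs_real_inner_le_norm _ _).trans (mul_le_mul_of_nonneg_left ht (norm_nonneg v))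
  rw [le_div_iff₀ hc]
  linarith [abs_le.1 (hbound p hfp), abs_le.1 (hbound q hfq)]

theorem volume_sublevel_le_of_norm_deriv_sub_le {f f' : ℝ → E} {a b lam δ : ℝ} (hlam : 0 < lam)
    (hf : ∀ t ∈ Icc a b, HasDerivWithinAt f (f' t) (Icc a b) t) (ha : lam ≤ ‖f' a‖)
    (hclose : ∀ t ∈ Icc a b, ‖f' t - f' a‖ ≤ lam / 2) :
    volume {t ∈ Icc a b | ‖f t‖ ≤ δ} ≤ ENNReal.ofReal (4 * δ / lam) := by
  have hv : 0 < ‖f' a‖ := hlam.trans_le ha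
  convert volume_sublevel_le_of_le_inner_deriv (f' a) (by positivity) hf
    fun t ht => le_inner_of_norm_sub_le ha (hclose t ht) using 2
  field_simp
  ring

theorem volume_sublevel_le_of_norm_second_deriv_le {f f' f'' : ℝ → E} {A B M lam δ : ℝ} {N : ℕ}
    (hN : 0 < N) (hAB : A ≤ B) (hlam : 0 < lam)
    (hf : ∀ t ∈ Icc A B, HasDerivWithinAt f (f' t) (Icc A B) t)
    (hf' : ∀ t ∈ Icc A B, HasDerivWithinAt f' (f'' t) (Icc A B) t)
    (hM : ∀ t ∈ Icc A B, ‖f'' t‖ ≤ M) (hlow : ∀ t ∈ Icc A B, lam ≤ ‖f' t‖)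
    (hNM : 2 * M * (B - A) ≤ N * lam) :
    volume {t ∈ Icc A B | ‖f t‖ ≤ δ} ≤ N * ENNReal.ofReal (4 * δ / lam) := by
  have hNpos : (0 : ℝ) < N := Nat.cast_pos.2 hN
  set L := (B - A) / N
  set x : ℕ → ℝ := fun i => A + i * L
  have hL : 0 ≤ L := div_nonneg (sub_nonneg.2 hAB) hNpos.le
  have hML : M * L ≤ lam / 2 := by
    rw [← mul_div_assoc, div_le_iff₀ hNpos]
    linarith
  have hM0 : 0 ≤ M := (norm_nonneg _).trans (hM A (left_mem_Icc.2 hAB))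
  have hpieces := measure_sep_Icc_le_of_partition volume (fun t => ‖f t‖ ≤ δ) hN x
    (ε := ENNReal.ofReal (4 * δ / lam)) fun i hi => by
      have hxA : A ≤ x i := le_add_of_nonneg_right (mul_nonneg i.cast_nonneg hL)
      have hxB : x (i + 1) ≤ B := by
        have : ((i + 1 : ℕ) : ℝ) * L ≤ N * L :=
          mul_le_mul_of_nonneg_right (Nat.cast_le.2 hi) hL
        simp only [x, L] at this ⊢
        rw [mul_div_cancel₀ _ hNpos.ne'] at this
        linarith
      have hsub : Icc (x i) (x (i + 1)) ⊆ Icc A B := Icc_subset_Icc hxA hxB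
      have hstep : x (i + 1) - x i = L := by simp only [x]; push_cast; ring
      refine volume_sublevel_le_of_norm_deriv_sub_le hlam (fun t ht => (hf t (hsub ht)).mono hsub)
        (hlow _ (hsub (left_mem_Icc.2 (by linarith)))) fun t ht => ?_
      calc ‖f' t - f' (x i)‖ ≤ M * (t - x i) :=
            norm_image_sub_le_of_norm_deriv_le_segment' (fun s hs => (hf' s (hsub hs)).mono hsub)
              (fun s hs => hM s (hsub (Ico_subset_Icc_self hs))) t ht
        _ ≤ M * L := mul_le_mul_of_nonneg_left (by linarith [ht.2]) hM0
        _ ≤ lam / 2 := hML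
  have hx0 : x 0 = A := by simp [x]
  have hxN : x N = B := by simp only [x, L]; field_simp; ring
  rwa [hx0, hxN] at hpieces

/-- Let `g : [A,B] → ℝ³` be twice continuously differentiable with `|g'| ≥ λ > 0` on `[A,B]`.
Then the Lebesgue measure of `{q ∈ [A,B] : |g(q)| ≤ δ}` is at most
`8δλ⁻¹ + 16(B−A)δλ⁻² max_{[A,B]} |g''|`. -/
theorem stmt14 (A B : ℝ) (hAB : A ≤ B) (g g' g'' : ℝ → E3) (lam δ : ℝ)
    (hlam : 0 < lam) (hδ : 0 < δ)
    (hg : ∀ q ∈ Set.Icc A B, HasDerivWithinAt g (g' q) (Set.Icc A B) q)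
    (hg' : ∀ q ∈ Set.Icc A B, HasDerivWithinAt g' (g'' q) (Set.Icc A B) q)
    (hcont : ContinuousOn g'' (Set.Icc A B))
    (hlow : ∀ q ∈ Set.Icc A B, lam ≤ ‖g' q‖) :
    volume {q ∈ Set.Icc A B | ‖g q‖ ≤ δ} ≤
      ENNReal.ofReal (8 * δ / lam +
        16 * (B - A) * δ / lam ^ 2 * sSup ((fun q => ‖g'' q‖) '' Set.Icc A B)) := by
  set M := sSup ((fun q => ‖g'' q‖) '' Icc A B)
  have hM : ∀ q ∈ Icc A B, ‖g'' q‖ ≤ M := fun q hq =>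
    le_csSup (isCompact_Icc.image_of_continuousOn hcont.norm).bddAbove (mem_image_of_mem _ hq)
  have hM0 : 0 ≤ M := (norm_nonneg _).trans (hM A (left_mem_Icc.2 hAB))
  have hBA : 0 ≤ B - A := sub_nonneg.2 hAB
  set K := 2 * M * (B - A) / lam
  have hK : 0 ≤ K := div_nonneg (mul_nonneg (by positivity) hBA) hlam.le
  have hKN : K ≤ ((⌊K⌋₊ + 1 : ℕ) : ℝ) := by push_cast; exact (Nat.lt_floor_add_one K).le
  have hNK : ((⌊K⌋₊ + 1 : ℕ) : ℝ) ≤ K + 1 := by push_cast; linarith [Nat.floor_le hK]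
  refine (volume_sublevel_le_of_norm_second_deriv_le (N := ⌊K⌋₊ + 1) (Nat.succ_pos _) hAB hlam
    hg hg' hM hlow ((div_le_iff₀ hlam).1 hKN)).trans ?_
  rw [← ENNReal.ofReal_natCast, ← ENNReal.ofReal_mul (Nat.cast_nonneg _)]
  refine ENNReal.ofReal_le_ofReal ?_
  calc ((⌊K⌋₊ + 1 : ℕ) : ℝ) * (4 * δ / lam) ≤ (K + 1) * (4 * δ / lam) := by gcongr
    _ = 4 * δ / lam + 8 * (B - A) * δ / lam ^ 2 * M := by simp only [K]; field_simp; ring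
    _ ≤ 8 * δ / lam + 16 * (B - A) * δ / lam ^ 2 * M := by gcongr <;> norm_num
end
end

section
/- Let 0 < Λ < 1/2 and let χ : ℝ → [0,1] be a smooth function with χ(t) = 0 whenever |||t||| ≤ Λ/3 and with derivative bounds |χ^{(k)}(t)| ≤ C_k Λ^{−k} for all t and all k ≥ 0. Then there exists a constant C_Λ (depending only on Λ and the constants C_k) such that for every 0 < η ≤ 1/2, every α ∈ ℝ and every ξ ∈ ℝ³, the oscillatory integral I(ξ) = ∫_{[−π,π]³} e^{i p·ξ} χ(e(p)) / |α − e(p) + iη| dp satisfies |I(ξ)| ≤ C_Λ |log η| / ⟨η |ξ|⟩, where ⟨x⟩ = (1 + x²)^{1/2}. -/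
open MeasureTheory Real

noncomputable section

/-- The torus `T³ = [−π,π]³`. -/
def T3 : Set (Fin 3 → ℝ) := {p | ∀ i, |p i| ≤ π}

/-- `|α − e(p) + iη|`. -/
def dnm (α η : ℝ) (p : Fin 3 → ℝ) : ℝ :=
  ‖((α - e3 p : ℝ) : ℂ) + (η : ℂ) * Complex.I‖

/-- Japanese bracket `⟨x⟩ = (1+x²)^{1/2}`. -/
def jap (x : ℝ) : ℝ := Real.sqrt (1 + x ^ 2)

/-- Euclidean norm of `ξ ∈ ℝ³`. -/
def enorm3 (ξ : Fin 3 → ℝ) : ℝ := Real.sqrt (∑ i, ξ i ^ 2)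

/-- The oscillatory integral `I(ξ) = ∫_{T³} e^{ip·ξ} χ(e(p))/|α − e(p) + iη| dp`. -/
def Iosc (χ : ℝ → ℝ) (α η : ℝ) (ξ : Fin 3 → ℝ) : ℂ :=
  ∫ p in T3,
    Complex.exp (Complex.I * ((∑ i, p i * ξ i : ℝ) : ℂ)) * ((χ (e3 p) / dnm α η p : ℝ) : ℂ)

namespace St17
open intervalIntegral

variable {χ : ℝ → ℝ} {α η : ℝ}



lemma log_ge (hη : 0 < η) (hη2 : η ≤ 1/2) : Real.log 2 ≤ |Real.log η| := by
  have h1 : Real.log η ≤ Real.log (1/2) := Real.log_le_log hη hη2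
  have h2 : Real.log (1/2) = -Real.log 2 := by
    rw [one_div, Real.log_inv]
  have : Real.log η ≤ -Real.log 2 := h1.trans_eq h2
  have h3 : (0:ℝ) < Real.log 2 := Real.log_pos (by norm_num)
  rw [abs_of_nonpos (by linarith)]
  linarith

lemma cont_abs_inv (hη : 0 < η) : Continuous fun v : ℝ => (|v| + η)⁻¹ := by
  apply Continuous.inv₀ (by continuity)
  intro v; positivity

lemma shift_nonneg (hη : 0 < η) {a : ℝ} (ha : 0 ≤ a) :
    ∫ v in a..(a+2), (|v|+η)⁻¹ ≤ ∫ v in (0:ℝ)..2, (|v|+η)⁻¹ := by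
  have key := intervalIntegral.integral_comp_add_right (a := (0:ℝ)) (b := 2)
      (fun v => (|v|+η)⁻¹) a
  rw [add_comm 2 a] at key
  simp only [zero_add] at key
  rw [← key]
  apply intervalIntegral.integral_mono_on (by norm_num)
    (((cont_abs_inv hη).comp (by continuity)).intervalIntegrable _ _)
    ((cont_abs_inv hη).intervalIntegrable _ _)
  intro v hv
  have hv0 : 0 ≤ v := hv.1
  have h2 : |v| ≤ |v + a| := by
    rw [abs_of_nonneg hv0, abs_of_nonneg (by linarith)]; linarith
  have h1 : (0:ℝ) < |v| + η := by positivity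
  exact inv_anti₀ h1 (by linarith)

lemma integral_abs_inv_nonneg {a b : ℝ} (hη : 0 < η) (hab : a ≤ b) :
    0 ≤ ∫ v in a..b, (|v|+η)⁻¹ :=
  intervalIntegral.integral_nonneg hab (fun v _ => by positivity)

lemma shift_int (hη : 0 < η) (a : ℝ) :
    ∫ v in a..(a+2), (|v|+η)⁻¹ ≤ 2 * ∫ v in (0:ℝ)..2, (|v|+η)⁻¹ := by
  have hint : ∀ c d : ℝ, IntervalIntegrable (fun v => (|v|+η)⁻¹) volume c d :=
    fun c d => (cont_abs_inv hη).intervalIntegrable _ _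
  have hrefl : ∀ c d : ℝ, ∫ v in c..d, (|(-v)|+η)⁻¹ = ∫ v in c..d, (|v|+η)⁻¹ := by
    intro c d; congr 1; ext v; rw [abs_neg]
  have base : 0 ≤ ∫ v in (0:ℝ)..2, (|v|+η)⁻¹ := integral_abs_inv_nonneg hη (by norm_num)
  rcases le_or_gt 0 a with ha | ha
  · linarith [shift_nonneg hη ha]
  rcases le_or_gt (a+2) 0 with hb | hb
  · have h := intervalIntegral.integral_comp_neg (a := -(a+2)) (b := -a)
        (fun v => (|v|+η)⁻¹)
    rw [hrefl] at h
    simp only [neg_neg] at h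
    have heq : ∫ v in a..(a+2), (|v|+η)⁻¹ = ∫ v in (-(a+2))..(-(a+2)+2), (|v|+η)⁻¹ := by
      rw [← h]
      congr 1 <;> ring
    rw [heq]
    linarith [shift_nonneg hη (by linarith : (0:ℝ) ≤ -(a+2))]
  · have hsplit : ∫ v in a..(a+2), (|v|+η)⁻¹
        = (∫ v in a..(0:ℝ), (|v|+η)⁻¹) + ∫ v in (0:ℝ)..(a+2), (|v|+η)⁻¹ :=
      (intervalIntegral.integral_add_adjacent_intervals (hint _ _) (hint _ _)).symm
    have h1 : ∫ v in a..(0:ℝ), (|v|+η)⁻¹ ≤ ∫ v in (0:ℝ)..2, (|v|+η)⁻¹ := by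
      have h := intervalIntegral.integral_comp_neg (a := (0:ℝ)) (b := -a)
          (fun v => (|v|+η)⁻¹)
      rw [hrefl] at h
      simp only [neg_neg, neg_zero] at h
      have heq : ∫ v in a..(0:ℝ), (|v|+η)⁻¹ = ∫ v in (0:ℝ)..(-a), (|v|+η)⁻¹ := by
        rw [← h]
      rw [heq]
      exact intervalIntegral.integral_mono_interval (le_refl (0:ℝ)) (by linarith) (by linarith)
        (Filter.Eventually.of_forall fun v => by positivity) (hint _ _)
    have h2 : ∫ v in (0:ℝ)..(a+2), (|v|+η)⁻¹ ≤ ∫ v in (0:ℝ)..2, (|v|+η)⁻¹ :=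
      intervalIntegral.integral_mono_interval (le_refl (0:ℝ)) (by linarith) (by linarith)
        (Filter.Eventually.of_forall fun v => by positivity) (hint _ _)
    linarith

lemma int_abs_inv (hη : 0 < η) (hη2 : η ≤ 1/2) :
    ∫ v in (0:ℝ)..2, (|v|+η)⁻¹ ≤ 3 * |Real.log η| := by
  have hcongr : ∫ v in (0:ℝ)..2, (|v|+η)⁻¹ = ∫ v in (0:ℝ)..2, (v+η)⁻¹ := by
    apply intervalIntegral.integral_congr
    intro v hv
    rw [Set.uIcc_of_le (by norm_num : (0:ℝ) ≤ 2)] at hv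
    show (|v|+η)⁻¹ = (v+η)⁻¹
    rw [abs_of_nonneg hv.1]
  rw [hcongr]
  have hftc : ∫ v in (0:ℝ)..2, (v+η)⁻¹ = Real.log (2+η) - Real.log (0+η) := by
    apply intervalIntegral.integral_eq_sub_of_hasDerivAt (f := fun v => Real.log (v+η))
    · intro v hv
      rw [Set.uIcc_of_le (by norm_num : (0:ℝ) ≤ 2)] at hv
      have hne : v + η ≠ 0 := by have := hv.1; positivity
      simpa using ((hasDerivAt_id' v).add_const η).log hne
    · apply ContinuousOn.intervalIntegrable
      apply ContinuousOn.inv₀ (by fun_prop)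
      intro v hv
      rw [Set.uIcc_of_le (by norm_num : (0:ℝ) ≤ 2)] at hv
      have := hv.1; positivity
  rw [hftc, zero_add]
  have hlog2 : Real.log 2 ≤ |Real.log η| := log_ge hη hη2
  have h3 : Real.log (2+η) ≤ Real.log 4 := Real.log_le_log (by linarith) (by linarith)
  have h4 : Real.log 4 = 2 * Real.log 2 := by
    rw [show (4:ℝ) = 2^2 by norm_num, Real.log_pow]; push_cast; ring
  have h5 : -Real.log η = |Real.log η| := by
    rw [abs_of_nonpos]
    apply Real.log_nonpos hη.le (by linarith)
  linarith [h3.trans_eq h4, h5]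

lemma L2 (hη : 0 < η) (hη2 : η ≤ 1/2) (c : ℝ) :
    ∫ u in (0:ℝ)..2, (Real.sqrt ((c-u)^2 + η^2))⁻¹ ≤ 12 * |Real.log η| := by
  have hptwise : ∀ u : ℝ, (Real.sqrt ((c-u)^2 + η^2))⁻¹ ≤ 2 * (|u - c| + η)⁻¹ := by
    intro u
    have h1 : |c - u| ≤ Real.sqrt ((c-u)^2 + η^2) := by
      rw [← Real.sqrt_sq_eq_abs]
      apply Real.sqrt_le_sqrt; nlinarith [sq_nonneg η]
    have h2 : η ≤ Real.sqrt ((c-u)^2 + η^2) := by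
      nlinarith [Real.sq_sqrt (show (0:ℝ) ≤ (c-u)^2+η^2 by positivity),
        Real.sqrt_nonneg ((c-u)^2+η^2), sq_nonneg (c-u)]
    have h3 : (|u - c| + η)/2 ≤ Real.sqrt ((c-u)^2 + η^2) := by
      rw [abs_sub_comm]; linarith
    have h4 : (0:ℝ) < (|u - c| + η)/2 := by positivity
    have h5 := inv_anti₀ h4 h3
    rw [show ((|u - c| + η)/2)⁻¹ = 2 * (|u - c| + η)⁻¹ by
      rw [inv_div, div_eq_mul_inv]] at h5
    exact h5
  have hcont : Continuous fun u : ℝ => (Real.sqrt ((c-u)^2 + η^2))⁻¹ := by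
    apply Continuous.inv₀ (by fun_prop)
    intro u
    apply ne_of_gt
    apply Real.sqrt_pos.mpr
    positivity
  have step1 : ∫ u in (0:ℝ)..2, (Real.sqrt ((c-u)^2 + η^2))⁻¹
      ≤ ∫ u in (0:ℝ)..2, 2 * (|u - c| + η)⁻¹ := by
    apply intervalIntegral.integral_mono_on (by norm_num)
      (hcont.intervalIntegrable _ _)
      ((continuous_const.mul
        ((cont_abs_inv hη).comp (by continuity))).intervalIntegrable _ _)
    exact fun u _ => hptwise u
  have step2 : ∫ u in (0:ℝ)..2, 2 * (|u - c| + η)⁻¹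
      = 2 * ∫ v in (-c)..(-c+2), (|v| + η)⁻¹ := by
    rw [intervalIntegral.integral_const_mul]
    congr 1
    have h := intervalIntegral.integral_comp_sub_right (a := (0:ℝ)) (b := 2)
      (fun v => (|v| + η)⁻¹) c
    rw [h]
    congr 1 <;> ring
  calc ∫ u in (0:ℝ)..2, (Real.sqrt ((c-u)^2 + η^2))⁻¹
      ≤ 2 * ∫ v in (-c)..(-c+2), (|v| + η)⁻¹ := by rw [← step2]; exact step1
    _ ≤ 2 * (2 * ∫ v in (0:ℝ)..2, (|v| + η)⁻¹) := by
        have := shift_int hη (-c); linarith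
    _ ≤ 12 * |Real.log η| := by
        have := int_abs_inv hη hη2; linarith

lemma L3 (hη : 0 < η) (c : ℝ) :
    ∫ u in (0:ℝ)..2, ((c-u)^2 + η^2)⁻¹ ≤ Real.pi / η := by
  have hsub : ∫ u in (0:ℝ)..2, ((c-u)^2 + η^2)⁻¹ = ∫ v in (-c)..(2-c), (v^2 + η^2)⁻¹ := by
    have h := intervalIntegral.integral_comp_sub_right (a := (0:ℝ)) (b := 2)
      (fun v => (v^2 + η^2)⁻¹) c
    have hgoal : ∫ u in (0:ℝ)..2, ((c-u)^2 + η^2)⁻¹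
        = ∫ u in (0:ℝ)..2, ((u-c)^2 + η^2)⁻¹ := by
      congr 1; ext u; rw [show (u - c)^2 = (c - u)^2 by ring]
    rw [hgoal, h]
    congr 1 <;> ring
  rw [hsub]
  have hftc : ∫ v in (-c)..(2-c), (v^2 + η^2)⁻¹
      = η⁻¹ * Real.arctan ((2-c) * η⁻¹) - η⁻¹ * Real.arctan ((-c) * η⁻¹) := by
    apply intervalIntegral.integral_eq_sub_of_hasDerivAt
      (f := fun v => η⁻¹ * Real.arctan (v * η⁻¹))
    · intro v hv
      have h1 : HasDerivAt (fun v : ℝ => v * η⁻¹) η⁻¹ v := by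
        simpa using (hasDerivAt_id v).mul_const η⁻¹
      have h2 := ((Real.hasDerivAt_arctan (v * η⁻¹)).comp v h1).const_mul η⁻¹
      refine h2.congr_deriv ?_
      have hne : η ≠ 0 := hη.ne'
      field_simp
      ring
    · apply Continuous.intervalIntegrable
      apply Continuous.inv₀ (by fun_prop)
      intro v; positivity
  rw [hftc]
  have b1 : Real.arctan ((2-c) * η⁻¹) < Real.pi/2 := Real.arctan_lt_pi_div_two _
  have b2 : -(Real.pi/2) < Real.arctan ((-c) * η⁻¹) := Real.neg_pi_div_two_lt_arctan _
  have hη' : (0:ℝ) < η⁻¹ := by positivity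
  rw [div_eq_mul_inv, mul_comm Real.pi η⁻¹]
  nlinarith

lemma L1 {h : ℝ → ℝ} (hh : Continuous h) :
    ∫ x in (-Real.pi)..Real.pi, |Real.sin x| * h (1 - Real.cos x)
      = 2 * ∫ u in (0:ℝ)..2, h u := by
  have hd : ∀ x : ℝ, HasDerivAt (fun x : ℝ => 1 - Real.cos x) (Real.sin x) x := by
    intro x
    simpa using (Real.hasDerivAt_cos x).const_sub 1
  have hcont : Continuous fun x : ℝ => |Real.sin x| * h (1 - Real.cos x) := by fun_prop
  have hsplit := (intervalIntegral.integral_add_adjacent_intervals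
    (μ := volume) (a := -Real.pi) (b := 0) (c := Real.pi)
    (hcont.intervalIntegrable _ _) (hcont.intervalIntegrable _ _)).symm
  rw [hsplit]
  have hpos : ∫ x in (0:ℝ)..Real.pi, |Real.sin x| * h (1 - Real.cos x)
      = ∫ u in (0:ℝ)..2, h u := by
    have hcg : ∫ x in (0:ℝ)..Real.pi, |Real.sin x| * h (1 - Real.cos x)
        = ∫ x in (0:ℝ)..Real.pi, Real.sin x • h (1 - Real.cos x) := by
      apply intervalIntegral.integral_congr
      intro x hx
      rw [Set.uIcc_of_le Real.pi_pos.le] at hx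
      show |Real.sin x| * h (1 - Real.cos x) = Real.sin x * h (1 - Real.cos x)
      rw [abs_of_nonneg (Real.sin_nonneg_of_nonneg_of_le_pi hx.1 hx.2)]
    rw [hcg]
    have key : (∫ x in (0:ℝ)..Real.pi, Real.sin x • h (1 - Real.cos x))
        = ∫ u in (1 - Real.cos 0)..(1 - Real.cos Real.pi), h u :=
      intervalIntegral.integral_comp_smul_deriv (fun x _ => hd x)
        (Real.continuous_sin.continuousOn) hh
    rw [key, Real.cos_zero, Real.cos_pi]
    norm_num
  have hneg : ∫ x in (-Real.pi)..(0:ℝ), |Real.sin x| * h (1 - Real.cos x)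
      = ∫ u in (0:ℝ)..2, h u := by
    have hcg : ∫ x in (-Real.pi)..(0:ℝ), |Real.sin x| * h (1 - Real.cos x)
        = ∫ x in (-Real.pi)..(0:ℝ), -(Real.sin x • h (1 - Real.cos x)) := by
      apply intervalIntegral.integral_congr
      intro x hx
      rw [Set.uIcc_of_le (by linarith [Real.pi_pos] : -Real.pi ≤ (0:ℝ))] at hx
      show |Real.sin x| * h (1 - Real.cos x) = -(Real.sin x * h (1 - Real.cos x))
      rw [abs_of_nonpos (Real.sin_nonpos_of_nonpos_of_neg_pi_le hx.2 (by linarith [hx.1]))]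
      ring
    rw [hcg, intervalIntegral.integral_neg]
    have key : (∫ x in (-Real.pi)..(0:ℝ), Real.sin x • h (1 - Real.cos x))
        = ∫ u in (1 - Real.cos (-Real.pi))..(1 - Real.cos 0), h u :=
      intervalIntegral.integral_comp_smul_deriv (fun x _ => hd x)
        (Real.continuous_sin.continuousOn) hh
    rw [key, Real.cos_zero, Real.cos_neg, Real.cos_pi]
    rw [show (1:ℝ) - -1 = 2 by norm_num, show (1:ℝ) - 1 = 0 by norm_num]
    rw [intervalIntegral.integral_symm]
    ring
  rw [hpos, hneg]
  ring



lemma measurableT3 : MeasurableSet T3 := by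
  have : T3 = Set.pi Set.univ (fun _ : Fin 3 => Set.Icc (-π) π) := by
    ext p
    rw [Set.mem_univ_pi]
    simp [T3, abs_le]
  rw [this]
  exact MeasurableSet.univ_pi (fun i => measurableSet_Icc)

lemma dnm_eq (α η : ℝ) (p : Fin 3 → ℝ) :
    dnm α η p = Real.sqrt ((α - e3 p)^2 + η^2) := by
  rw [dnm, Complex.norm_def]
  congr 1
  rw [show ((α - e3 p : ℝ) : ℂ) + (η : ℂ) * Complex.I
      = Complex.mk (α - e3 p) η by
    apply Complex.ext <;> simp]
  simp [Complex.normSq_mk]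
  ring

/-- Fubini transfer: integral over T3 as iterated integral. -/
lemma torus_iterated {E : Type*} [NormedAddCommGroup E] [NormedSpace ℝ E]
    (H : ℝ → ℝ → ℝ → E) (hH : Continuous fun q : ℝ × ℝ × ℝ => H q.1 q.2.1 q.2.2) :
    ∫ p in T3, H (p 0) (p 1) (p 2)
      = ∫ x in Set.Icc (-π) π, ∫ y in Set.Icc (-π) π, ∫ z in Set.Icc (-π) π, H x y z := by
  set Φ : (Fin 3 → ℝ) ≃ᵐ ℝ × (ℝ × ℝ) :=
    (MeasurableEquiv.piFinSuccAbove (fun _ : Fin 3 => ℝ) 0).trans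
      ((MeasurableEquiv.refl ℝ).prodCongr MeasurableEquiv.finTwoArrow) with hΦdef
  have hmp : MeasurePreserving Φ volume volume := by
    have h1 := volume_preserving_piFinSuccAbove (fun _ : Fin 3 => ℝ) 0
    have h2 : MeasurePreserving
        ((MeasurableEquiv.refl ℝ).prodCongr (MeasurableEquiv.finTwoArrow (α := ℝ)))
        volume volume := by
      have hp := (MeasurePreserving.id (volume : Measure ℝ)).prod
        (volume_preserving_finTwoArrow ℝ)
      exact hp
    exact h2.comp h1
  have hΦapp : ∀ p : Fin 3 → ℝ, Φ p = (p 0, (p 1, p 2)) := by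
    intro p
    simp [hΦdef, MeasurableEquiv.piFinSuccAbove_apply, MeasurableEquiv.finTwoArrow,
      MeasurableEquiv.prodCongr, Equiv.prodCongr, MeasurableEquiv.piFinTwo_apply,
      Fin.succAbove]
    constructor <;> rfl
  have hpre : Φ ⁻¹' (Set.Icc (-π) π ×ˢ (Set.Icc (-π) π ×ˢ Set.Icc (-π) π)) = T3 := by
    ext p
    simp only [Set.mem_preimage, hΦapp, Set.mem_prod, Set.mem_Icc, T3, Set.mem_setOf_eq]
    constructor
    · rintro ⟨h0, h1, h2⟩ i
      fin_cases i <;> rw [abs_le] <;> tauto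
    · intro h
      refine ⟨?_, ?_, ?_⟩ <;> rw [← abs_le] <;> exact h _
  have key := hmp.setIntegral_preimage_emb Φ.measurableEmbedding
    (fun q : ℝ × ℝ × ℝ => H q.1 q.2.1 q.2.2)
    (Set.Icc (-π) π ×ˢ (Set.Icc (-π) π ×ˢ Set.Icc (-π) π))
  rw [hpre] at key
  have keyL : ∫ p in T3, H (p 0) (p 1) (p 2)
      = ∫ q in Set.Icc (-π) π ×ˢ (Set.Icc (-π) π ×ˢ Set.Icc (-π) π),
          H q.1 q.2.1 q.2.2 := by
    rw [← key]
    apply setIntegral_congr_fun measurableT3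
    intro p _
    show H (p 0) (p 1) (p 2) = H (Φ p).1 (Φ p).2.1 (Φ p).2.2
    rw [hΦapp p]
  rw [keyL]
  have hcpt : IsCompact (Set.Icc (-π) π ×ˢ (Set.Icc (-π) π ×ˢ Set.Icc (-π) π)) :=
    isCompact_Icc.prod (isCompact_Icc.prod isCompact_Icc)
  have hint : IntegrableOn (fun q : ℝ × ℝ × ℝ => H q.1 q.2.1 q.2.2)
      (Set.Icc (-π) π ×ˢ (Set.Icc (-π) π ×ˢ Set.Icc (-π) π)) volume :=
    (hH.locallyIntegrable.integrableOn_isCompact hcpt)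
  rw [show (volume : Measure (ℝ × ℝ × ℝ)) = (volume : Measure ℝ).prod volume from rfl] at hint ⊢
  rw [setIntegral_prod _ hint]
  apply MeasureTheory.integral_congr_ae (Filter.Eventually.of_forall ?_)
  intro x
  have hintx : IntegrableOn (fun q : ℝ × ℝ => H x q.1 q.2)
      (Set.Icc (-π) π ×ˢ Set.Icc (-π) π) volume := by
    have : Continuous fun q : ℝ × ℝ => H x q.1 q.2 := by
      have := hH.comp (Continuous.prodMk_right x)
      exact this
    exact this.locallyIntegrable.integrableOn_isCompact (isCompact_Icc.prod isCompact_Icc)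
  rw [show (volume : Measure (ℝ × ℝ)) = (volume : Measure ℝ).prod volume from rfl] at hintx
  exact setIntegral_prod _ hintx

/-- Permutation invariance of integrals over T3. -/
lemma perm_T3 {E : Type*} [NormedAddCommGroup E] [NormedSpace ℝ E]
    (σ : Equiv.Perm (Fin 3)) (G : (Fin 3 → ℝ) → E) :
    ∫ p in T3, G (fun i => p (σ i)) = ∫ p in T3, G p := by
  set Ψ : (Fin 3 → ℝ) ≃ᵐ (Fin 3 → ℝ) :=
    MeasurableEquiv.arrowCongr' σ.symm (MeasurableEquiv.refl ℝ) with hΨdef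
  have hmp : MeasurePreserving Ψ volume volume :=
    volume_preserving_arrowCongr' _ _ (MeasurePreserving.id _)
  have happ : ∀ p : Fin 3 → ℝ, Ψ p = fun i => p (σ i) := by
    intro p; funext i
    simp [hΨdef, MeasurableEquiv.arrowCongr', Equiv.arrowCongr', Equiv.arrowCongr]
  have hpre : Ψ ⁻¹' T3 = T3 := by
    ext p
    simp only [Set.mem_preimage, happ, T3, Set.mem_setOf_eq]
    constructor
    · intro h i
      have := h (σ.symm i)
      simpa using this
    · intro h i
      exact h (σ i)
  have key := hmp.setIntegral_preimage_emb Ψ.measurableEmbedding G T3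
  rw [hpre] at key
  rw [← key]
  apply setIntegral_congr_fun measurableT3
  intro p _
  show G (fun i => p (σ i)) = G (Ψ p)
  rw [happ p]

lemma e3_perm (σ : Equiv.Perm (Fin 3)) (p : Fin 3 → ℝ) :
    e3 (fun i => p (σ i)) = e3 p := by
  rw [e3, e3]
  exact Fintype.sum_equiv σ _ _ (fun i => rfl)

lemma enorm3_perm (σ : Equiv.Perm (Fin 3)) (ξ : Fin 3 → ℝ) :
    enorm3 (fun i => ξ (σ i)) = enorm3 ξ := by
  rw [enorm3, enorm3]
  congr 1
  exact Fintype.sum_equiv σ _ _ (fun i => rfl)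

lemma Iosc_perm (χ : ℝ → ℝ) (α η : ℝ) (ξ : Fin 3 → ℝ) (σ : Equiv.Perm (Fin 3)) :
    Iosc χ α η ξ = Iosc χ α η (fun i => ξ (σ i)) := by
  rw [Iosc, Iosc]
  rw [← perm_T3 σ (fun p => Complex.exp (Complex.I * ((∑ i, p i * (fun i => ξ (σ i)) i : ℝ) : ℂ))
      * ((χ (e3 p) / dnm α η p : ℝ) : ℂ))]
  apply setIntegral_congr_fun measurableT3
  intro p _
  show Complex.exp (Complex.I * ((∑ i, p i * ξ i : ℝ) : ℂ)) * ((χ (e3 p) / dnm α η p : ℝ) : ℂ)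
      = Complex.exp (Complex.I * ((∑ i, p (σ i) * ξ (σ i) : ℝ) : ℂ))
        * ((χ (e3 (fun i => p (σ i))) / dnm α η (fun i => p (σ i)) : ℝ) : ℂ)
  have hsum : (∑ i, p (σ i) * ξ (σ i)) = ∑ i, p i * ξ i :=
    Fintype.sum_equiv σ _ _ (fun i => rfl)
  rw [e3_perm σ p, dnm, dnm, e3_perm σ p, hsum]



def Df (α η t : ℝ) : ℝ := Real.sqrt ((α - t)^2 + η^2)

def phi (χ : ℝ → ℝ) (α η t : ℝ) : ℝ := χ t / Df α η t

def phi' (χ : ℝ → ℝ) (α η t : ℝ) : ℝ :=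
  deriv χ t / Df α η t + χ t * (α - t) / (Df α η t)^3


lemma Df_pos (hη : 0 < η) (t : ℝ) : 0 < Df α η t :=
  Real.sqrt_pos.mpr (by positivity)

lemma Df_sq (hη : 0 < η) (t : ℝ) : (Df α η t)^2 = (α - t)^2 + η^2 :=
  Real.sq_sqrt (by positivity)

lemma Df_ge (hη : 0 < η) (t : ℝ) : η ≤ Df α η t := by
  have h := Df_sq (α := α) hη t
  nlinarith [Df_pos (α := α) hη t, sq_nonneg (α - t)]

lemma abs_le_Df (hη : 0 < η) (t : ℝ) : |α - t| ≤ Df α η t := by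
  have h := Df_sq (α := α) hη t
  have h2 := Df_pos (α := α) hη t
  have : |α - t|^2 ≤ (Df α η t)^2 := by rw [h, sq_abs]; nlinarith
  nlinarith [abs_nonneg (α - t)]

lemma Df_cont (hη : 0 < η) : Continuous (Df α η) :=
  Real.continuous_sqrt.comp (by continuity)

lemma dnm_eq_Df (hη : 0 < η) (p : Fin 3 → ℝ) : dnm α η p = Df α η (e3 p) := dnm_eq α η p

lemma hasDerivAt_Df (hη : 0 < η) (t : ℝ) :
    HasDerivAt (Df α η) (-(α - t) / Df α η t) t := by
  have hq : HasDerivAt (fun t : ℝ => (α - t)^2 + η^2) (2*(α - t)^1*(-1)) t := by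
    exact (((hasDerivAt_id t).const_sub α).pow 2).add_const (η^2)
  have hne : (α - t)^2 + η^2 ≠ 0 := by positivity
  have hsq := (Real.hasDerivAt_sqrt hne).comp t hq
  refine hsq.congr_deriv ?_
  rw [show Df α η t = Real.sqrt ((α - t)^2 + η^2) from rfl]
  have hs : Real.sqrt ((α - t)^2 + η^2) ≠ 0 := (Real.sqrt_pos.mpr (by positivity)).ne'
  field_simp

lemma hasDerivAt_phi (hη : 0 < η) (hχ : ContDiff ℝ (⊤ : ℕ∞) χ) (t : ℝ) :
    HasDerivAt (phi χ α η) (phi' χ α η t) t := by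
  have hc : HasDerivAt χ (deriv χ t) t := (hχ.differentiable (by simp) t).hasDerivAt
  have hD := hasDerivAt_Df (α := α) hη t
  have hpos := Df_pos (α := α) hη t
  have hdiv := hc.div hD hpos.ne'
  refine hdiv.congr_deriv ?_
  rw [phi']
  field_simp
  ring

lemma phi_bound (hη : 0 < η) (hr : ∀ t, χ t ∈ Set.Icc (0:ℝ) 1) (t : ℝ) :
    |phi χ α η t| ≤ η⁻¹ := by
  have h1 := (hr t).1
  have h2 := (hr t).2
  have hpos := Df_pos (α := α) hη t
  have hge := Df_ge (α := α) hη t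
  rw [phi, abs_div, abs_of_nonneg h1, abs_of_pos hpos]
  rw [div_le_iff₀ hpos]
  have : η⁻¹ * η = 1 := inv_mul_cancel₀ hη.ne'
  calc χ t ≤ 1 := h2
    _ = η⁻¹ * η := this.symm
    _ ≤ η⁻¹ * Df α η t := by
        apply mul_le_mul_of_nonneg_left hge (by positivity)

lemma phi'_bound (hη : 0 < η) (hr : ∀ t, χ t ∈ Set.Icc (0:ℝ) 1)
    {K : ℝ} (hd1 : ∀ t, |deriv χ t| ≤ K) (t : ℝ) :
    |phi' χ α η t| ≤ K * η⁻¹ + ((α - t)^2 + η^2)⁻¹ := by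
  have hpos := Df_pos (α := α) hη t
  have hge := Df_ge (α := α) hη t
  have habs := abs_le_Df (α := α) hη t
  have h1 : |deriv χ t / Df α η t| ≤ K * η⁻¹ := by
    rw [abs_div, abs_of_pos hpos, div_le_iff₀ hpos]
    have hK : 0 ≤ K := (abs_nonneg _).trans (hd1 t)
    calc |deriv χ t| ≤ K := hd1 t
      _ = K * η⁻¹ * η := by field_simp
      _ ≤ K * η⁻¹ * Df α η t := by
          apply mul_le_mul_of_nonneg_left hge (by positivity)
  have h2 : |χ t * (α - t) / (Df α η t)^3| ≤ ((α - t)^2 + η^2)⁻¹ := by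
    rw [abs_div, abs_mul]
    have hχb : |χ t| ≤ 1 := by
      rw [abs_of_nonneg (hr t).1]; exact (hr t).2
    have hd3 : |(Df α η t)^3| = (Df α η t)^3 := abs_of_pos (by positivity)
    rw [hd3]
    rw [div_le_iff₀ (by positivity)]
    rw [← Df_sq (α := α) hη t]
    have hstep : |χ t| * |α - t| ≤ Df α η t := by
      calc |χ t| * |α - t| ≤ 1 * Df α η t := by
            apply mul_le_mul hχb habs (abs_nonneg _) zero_le_one
        _ = Df α η t := one_mul _
    calc |χ t| * |α - t| ≤ Df α η t := hstep
      _ = ((Df α η t)^2)⁻¹ * (Df α η t)^3 := by field_simp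
  calc |phi' χ α η t| ≤ |deriv χ t / Df α η t| + |χ t * (α - t) / (Df α η t)^3| :=
        abs_add_le _ _
    _ ≤ K * η⁻¹ + ((α - t)^2 + η^2)⁻¹ := add_le_add h1 h2

lemma phi_cont (hη : 0 < η) (hχ : ContDiff ℝ (⊤ : ℕ∞) χ) : Continuous (phi χ α η) :=
  hχ.continuous.div (Df_cont hη) (fun t => (Df_pos hη t).ne')

lemma phi'_cont (hη : 0 < η) (hχ : ContDiff ℝ (⊤ : ℕ∞) χ) : Continuous (phi' χ α η) := by
  apply Continuous.add
  · exact (hχ.continuous_deriv (by simp)).div (Df_cont hη) (fun t => (Df_pos hη t).ne')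
  · exact (hχ.continuous.mul (by continuity)).div ((Df_cont hη).pow 3)
      (fun t => pow_ne_zero 3 (Df_pos hη t).ne')

/-- Integration by parts bound. -/
lemma ibp_bound (b : ℝ) (hb : b ≠ 0) (ψ ψ' : ℝ → ℝ)
    (hd : ∀ z, HasDerivAt ψ (ψ' z) z)
    (hψ'c : Continuous ψ') (Mb M' : ℝ)
    (hMb : ∀ z, |ψ z| ≤ Mb) (hM' : ∫ z in (-π)..π, |ψ' z| ≤ M') :
    ‖∫ z in (-π)..π, Complex.exp (Complex.I * z * b) * (ψ z : ℂ)‖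
      ≤ (2*Mb + M') / |b| := by
  set c : ℂ := Complex.I * b with hcdef
  have hc : c ≠ 0 := mul_ne_zero Complex.I_ne_zero (by exact_mod_cast hb)
  have habsc : ‖c‖ = |b| := by
    rw [hcdef, norm_mul, Complex.norm_I, one_mul, Complex.norm_real, Real.norm_eq_abs]
  have habse : ∀ z : ℝ, ‖Complex.exp (Complex.I * z * b)‖ = 1 := by
    intro z
    rw [Complex.norm_exp]
    have : (Complex.I * z * b).re = 0 := by simp
    rw [this, Real.exp_zero]
  have hu : ∀ z : ℝ, HasDerivAt (fun z : ℝ => ((ψ z : ℝ) : ℂ)) ((ψ' z : ℝ) : ℂ) z :=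
    fun z => (hd z).ofReal_comp
  have hv : ∀ z : ℝ, HasDerivAt (fun z : ℝ => Complex.exp (Complex.I * z * b) * c⁻¹)
      (Complex.exp (Complex.I * z * b)) z := by
    intro z
    have hlin : ∀ w : ℂ, HasDerivAt (fun w : ℂ => Complex.I * w * b) c w := by
      intro w
      simpa using ((hasDerivAt_id w).const_mul Complex.I).mul_const (b : ℂ)
    have hexp : HasDerivAt (fun w : ℂ => Complex.exp (Complex.I * w * b))
        (Complex.exp (Complex.I * z * b) * c) z :=
      (Complex.hasDerivAt_exp _).comp _ (hlin _)
    have hR := hexp.comp_ofReal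
    have := hR.mul_const c⁻¹
    simpa [mul_assoc, mul_inv_cancel₀ hc] using this
  have hint_u' : IntervalIntegrable (fun z : ℝ => ((ψ' z : ℝ) : ℂ)) volume (-π) π :=
    (Complex.continuous_ofReal.comp hψ'c).intervalIntegrable _ _
  have hcontv' : Continuous fun z : ℝ => Complex.exp (Complex.I * z * b) := by
    apply Complex.continuous_exp.comp
    continuity
  have key := intervalIntegral.integral_mul_deriv_eq_deriv_mul
    (u := fun z : ℝ => ((ψ z : ℝ) : ℂ)) (v := fun z => Complex.exp (Complex.I * z * b) * c⁻¹)
    (u' := fun z : ℝ => ((ψ' z : ℝ) : ℂ)) (v' := fun z => Complex.exp (Complex.I * z * b))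
    (fun z _ => hu z) (fun z _ => hv z) hint_u' (hcontv'.intervalIntegrable _ _)
  have hcomm : (∫ z in (-π)..π, Complex.exp (Complex.I * z * b) * (ψ z : ℂ))
      = ∫ z in (-π)..π, ((ψ z : ℝ) : ℂ) * Complex.exp (Complex.I * z * b) :=
    intervalIntegral.integral_congr (fun z _ => mul_comm _ _)
  rw [hcomm, key]
  beta_reduce
  rw [Complex.ofReal_neg]
  have hMb0 : 0 ≤ Mb := (abs_nonneg _).trans (hMb 0)
  have hbnd : ∀ z : ℝ, ‖((ψ z : ℝ) : ℂ) * (Complex.exp (Complex.I * z * b) * c⁻¹)‖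
      ≤ Mb / |b| := by
    intro z
    rw [norm_mul, norm_mul, Complex.norm_real, Real.norm_eq_abs, habse z, norm_inv, habsc, one_mul]
    rw [div_eq_mul_inv]
    apply mul_le_mul_of_nonneg_right (hMb z) (by positivity)
  have hintbnd : ‖∫ z in (-π)..π, ((ψ' z : ℝ) : ℂ)
      * (Complex.exp (Complex.I * z * b) * c⁻¹)‖ ≤ M' / |b| := by
    have h1 : ‖∫ z in (-π)..π, ((ψ' z : ℝ) : ℂ) * (Complex.exp (Complex.I * z * b) * c⁻¹)‖
        ≤ ∫ z in (-π)..π, ‖((ψ' z : ℝ) : ℂ) * (Complex.exp (Complex.I * z * b) * c⁻¹)‖ := by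
      apply intervalIntegral.norm_integral_le_integral_norm
      linarith [Real.pi_pos]
    have h2 : (∫ z in (-π)..π, ‖((ψ' z : ℝ) : ℂ) * (Complex.exp (Complex.I * z * b) * c⁻¹)‖)
        = ∫ z in (-π)..π, |ψ' z| * |b|⁻¹ := by
      apply intervalIntegral.integral_congr
      intro z _
      show ‖_‖ = _
      rw [norm_mul, norm_mul, Complex.norm_real, Real.norm_eq_abs, habse z, norm_inv, habsc, one_mul]
    have h3 : (∫ z in (-π)..π, |ψ' z| * |b|⁻¹) = (∫ z in (-π)..π, |ψ' z|) * |b|⁻¹ :=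
      intervalIntegral.integral_mul_const _ _
    have h4 : (∫ z in (-π)..π, |ψ' z|) * |b|⁻¹ ≤ M' * |b|⁻¹ :=
      mul_le_mul_of_nonneg_right hM' (by positivity)
    calc ‖∫ z in (-π)..π, ((ψ' z : ℝ) : ℂ)
        * (Complex.exp (Complex.I * z * b) * c⁻¹)‖ ≤ _ := h1
      _ = _ := h2
      _ = _ := h3
      _ ≤ M' * |b|⁻¹ := h4
      _ = M' / |b| := (div_eq_mul_inv _ _).symm
  calc ‖((ψ π : ℝ) : ℂ) * (Complex.exp (Complex.I * π * b) * c⁻¹)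
        - ((ψ (-π) : ℝ) : ℂ) * (Complex.exp (Complex.I * (-π) * b) * c⁻¹)
        - ∫ z in (-π)..π, ((ψ' z : ℝ) : ℂ) * (Complex.exp (Complex.I * z * b) * c⁻¹)‖
      ≤ ‖((ψ π : ℝ) : ℂ) * (Complex.exp (Complex.I * π * b) * c⁻¹)
        - ((ψ (-π) : ℝ) : ℂ) * (Complex.exp (Complex.I * (-π) * b) * c⁻¹)‖
        + ‖∫ z in (-π)..π, ((ψ' z : ℝ) : ℂ)
          * (Complex.exp (Complex.I * z * b) * c⁻¹)‖ := by
        apply norm_sub_le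
    _ ≤ (Mb / |b| + Mb / |b|) + M' / |b| := by
        apply add_le_add _ hintbnd
        calc ‖_‖ ≤ _ + _ := norm_sub_le _ _
          _ ≤ Mb / |b| + Mb / |b| := add_le_add (hbnd π) (by simpa using hbnd (-π))
    _ = (2*Mb + M') / |b| := by ring




/-- The decay bound for the innermost oscillatory integral. -/
lemma inner_decay (hη : 0 < η) (hχ : ContDiff ℝ (⊤ : ℕ∞) χ) (hr : ∀ t, χ t ∈ Set.Icc (0:ℝ) 1)
    {K : ℝ} (hd1 : ∀ t, |deriv χ t| ≤ K) (c₀ : ℝ) (b : ℝ) (hb : b ≠ 0) :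
    ‖∫ z in (-π)..π,
        Complex.exp (Complex.I * z * b) * ((phi χ α η (c₀ + (1 - Real.cos z)) : ℝ) : ℂ)‖
      ≤ (2*η⁻¹ + (4*K*η⁻¹ + 2*π*η⁻¹)) / |b| := by
  have hK : 0 ≤ K := (abs_nonneg _).trans (hd1 0)
  set ψ : ℝ → ℝ := fun z => phi χ α η (c₀ + (1 - Real.cos z)) with hψdef
  set ψ' : ℝ → ℝ := fun z => phi' χ α η (c₀ + (1 - Real.cos z)) * Real.sin z with hψ'def
  have hinner : ∀ z : ℝ, HasDerivAt (fun z : ℝ => c₀ + (1 - Real.cos z)) (Real.sin z) z := by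
    intro z
    simpa using ((Real.hasDerivAt_cos z).const_sub 1).const_add c₀
  have hd : ∀ z, HasDerivAt ψ (ψ' z) z := by
    intro z
    exact (hasDerivAt_phi hη hχ _).comp z (hinner z)
  have hψ'c : Continuous ψ' := ((phi'_cont hη hχ).comp (by continuity)).mul Real.continuous_sin
  have hMb : ∀ z, |ψ z| ≤ η⁻¹ := fun z => phi_bound hη hr _
  have hM' : ∫ z in (-π)..π, |ψ' z| ≤ 4*K*η⁻¹ + 2*π*η⁻¹ := by
    set h : ℝ → ℝ := fun u => K*η⁻¹ + (((α - c₀) - u)^2 + η^2)⁻¹ with hhdef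
    have hhc : Continuous h := by
      apply continuous_const.add
      apply Continuous.inv₀ (by continuity)
      intro u; positivity
    have hptw : ∀ z, |ψ' z| ≤ |Real.sin z| * h (1 - Real.cos z) := by
      intro z
      rw [hψ'def]
      show |phi' χ α η (c₀ + (1 - Real.cos z)) * Real.sin z| ≤ _
      rw [abs_mul, mul_comm]
      apply mul_le_mul_of_nonneg_left _ (abs_nonneg _)
      have := phi'_bound (α := α) hη hr hd1 (c₀ + (1 - Real.cos z))
      rw [hhdef]
      calc |phi' χ α η (c₀ + (1 - Real.cos z))|
          ≤ K * η⁻¹ + ((α - (c₀ + (1 - Real.cos z)))^2 + η^2)⁻¹ := this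
        _ = K*η⁻¹ + (((α - c₀) - (1 - Real.cos z))^2 + η^2)⁻¹ := by ring_nf
    have hmono : ∫ z in (-π)..π, |ψ' z| ≤ ∫ z in (-π)..π, |Real.sin z| * h (1 - Real.cos z) := by
      apply intervalIntegral.integral_mono_on (by linarith [Real.pi_pos])
        ((hψ'c.abs).intervalIntegrable _ _)
        ((continuous_abs.comp Real.continuous_sin |>.mul
          (hhc.comp (by continuity))).intervalIntegrable _ _)
      exact fun z _ => hptw z
    have hL1 := L1 (h := h) hhc
    have hsplit : ∫ u in (0:ℝ)..2, h u
        = (∫ u in (0:ℝ)..2, K*η⁻¹) + ∫ u in (0:ℝ)..2, (((α - c₀) - u)^2 + η^2)⁻¹ := by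
      rw [hhdef]
      apply intervalIntegral.integral_add
      · exact intervalIntegrable_const
      · apply Continuous.intervalIntegrable
        apply Continuous.inv₀ (by continuity)
        intro u; positivity
    have hc2 : (∫ u in (0:ℝ)..2, K*η⁻¹) = 2 * (K*η⁻¹) := by simp; ring
    have hL3' : ∫ u in (0:ℝ)..2, (((α - c₀) - u)^2 + η^2)⁻¹ ≤ π/η := L3 hη (α - c₀)
    calc ∫ z in (-π)..π, |ψ' z| ≤ ∫ z in (-π)..π, |Real.sin z| * h (1 - Real.cos z) := hmono
      _ = 2 * ∫ u in (0:ℝ)..2, h u := hL1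
      _ = 2 * ((∫ u in (0:ℝ)..2, K*η⁻¹) + ∫ u in (0:ℝ)..2, (((α - c₀) - u)^2 + η^2)⁻¹) := by
          rw [hsplit]
      _ ≤ 2 * (2 * (K*η⁻¹) + π/η) := by
          rw [hc2]
          have : (0:ℝ) < 2 := by norm_num
          nlinarith [hL3']
      _ = 4*K*η⁻¹ + 2*π*η⁻¹ := by field_simp; ring
  exact ibp_bound b hb ψ ψ' hd hψ'c η⁻¹ (4*K*η⁻¹ + 2*π*η⁻¹) hMb hM'

/-- The log bound for the innermost integral with |sin z| weight. -/
lemma inner_log (hη : 0 < η) (hη2 : η ≤ 1/2) (c₀ : ℝ) :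
    ∫ z in (-π)..π, |Real.sin z| * (Df α η (c₀ + (1 - Real.cos z)))⁻¹
      ≤ 24 * |Real.log η| := by
  set h : ℝ → ℝ := fun u => (Df α η (c₀ + u))⁻¹ with hhdef
  have hhc : Continuous h := by
    apply Continuous.inv₀ ((Df_cont hη).comp (by continuity))
    intro u; exact (Df_pos hη _).ne'
  have hL1 := L1 (h := h) hhc
  rw [hL1]
  have heq : ∫ u in (0:ℝ)..2, h u
      = ∫ u in (0:ℝ)..2, (Real.sqrt (((α - c₀) - u)^2 + η^2))⁻¹ := by
    apply intervalIntegral.integral_congr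
    intro u _
    show (Df α η (c₀ + u))⁻¹ = _
    rw [Df]
    congr 2
    ring
  rw [heq]
  have := L2 hη hη2 (α - c₀)
  linarith [this]

/-- tri is at most distance to each of 0, 2, 4, 6. -/
lemma tri_le_abs {t v : ℝ} (hv : v = 0 ∨ v = 2 ∨ v = 4 ∨ v = 6) : tri t ≤ |t - v| := by
  rcases hv with h | h | h | h <;> subst h
  · calc tri t ≤ |t| := min_le_left _ _
      _ = |t - 0| := by norm_num
  · exact (min_le_right _ _).trans (min_le_left _ _)
  · exact (min_le_right _ _).trans ((min_le_right _ _).trans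
      ((min_le_right _ _).trans (min_le_left _ _)))
  · exact (min_le_right _ _).trans ((min_le_right _ _).trans
      ((min_le_right _ _).trans (min_le_right _ _)))

/-- distance of 1 - cos x to the nearest of 0,2 when sin is small -/
lemma cos_dist {δ x : ℝ} (hδ : 0 < δ) (hsin : |Real.sin x| < δ) :
    |(1 - Real.cos x) - (if Real.cos x < 0 then (2:ℝ) else 0)| ≤ δ^2 := by
  have hs2 := Real.sin_sq_add_cos_sq x
  have hsin2 : Real.sin x^2 < δ^2 := by
    rw [← sq_abs]
    apply pow_lt_pow_left₀ hsin (abs_nonneg _) (by norm_num)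
  have hcos1 := abs_le.mp (Real.abs_cos_le_one x)
  by_cases hc : Real.cos x < 0
  · rw [if_pos hc]
    have habs : |(1 - Real.cos x) - 2| = 1 + Real.cos x := by
      rw [abs_of_nonpos (by nlinarith)]
      ring
    rw [habs]
    nlinarith [mul_nonneg (neg_nonneg.mpr hc.le) (by nlinarith : (0:ℝ) ≤ 1 + Real.cos x)]
  · rw [if_neg hc]
    push_neg at hc
    have habs : |(1 - Real.cos x) - 0| = 1 - Real.cos x := by
      rw [sub_zero, abs_of_nonneg (by nlinarith)]
    rw [habs]
    nlinarith

/-- Pointwise support bound: away from the critical set, some sine is large. -/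
lemma support_bound {Λ : ℝ} (hΛ0 : 0 < Λ) (hη : 0 < η)
    (hr : ∀ t, χ t ∈ Set.Icc (0:ℝ) 1)
    (hsupp : ∀ t : ℝ, tri t ≤ Λ / 3 → χ t = 0) (p : Fin 3 → ℝ) :
    χ (e3 p) / dnm α η p ≤ (3 / Real.sqrt Λ) *
      ((|Real.sin (p 0)| + |Real.sin (p 1)| + |Real.sin (p 2)|) / dnm α η p) := by
  have hdnm : 0 < dnm α η p := by rw [dnm_eq_Df hη]; exact Df_pos hη _
  set δ : ℝ := Real.sqrt Λ / 3 with hδdef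
  have hδ0 : 0 < δ := by
    rw [hδdef]; positivity
  have hδsq : δ^2 = Λ / 9 := by
    rw [hδdef, div_pow, Real.sq_sqrt hΛ0.le]; norm_num
  rcases le_or_gt δ (|Real.sin (p 0)| + |Real.sin (p 1)| + |Real.sin (p 2)|) with hs | hs
  · have h1 : χ (e3 p) ≤ (|Real.sin (p 0)| + |Real.sin (p 1)| + |Real.sin (p 2)|) / δ := by
      calc χ (e3 p) ≤ 1 := (hr _).2
        _ ≤ _ / δ := by rw [le_div_iff₀ hδ0]; linarith
    have heq : (3 / Real.sqrt Λ) *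
        ((|Real.sin (p 0)| + |Real.sin (p 1)| + |Real.sin (p 2)|) / dnm α η p)
        = ((|Real.sin (p 0)| + |Real.sin (p 1)| + |Real.sin (p 2)|) / δ) / dnm α η p := by
      rw [hδdef]
      have hΛne : Real.sqrt Λ ≠ 0 := (Real.sqrt_pos.mpr hΛ0).ne'
      field_simp
    rw [heq]
    exact div_le_div_of_nonneg_right h1 hdnm.le
  · have h0 : |Real.sin (p 0)| < δ := by
      have := abs_nonneg (Real.sin (p 1)); have := abs_nonneg (Real.sin (p 2)); linarith
    have h1 : |Real.sin (p 1)| < δ := by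
      have := abs_nonneg (Real.sin (p 0)); have := abs_nonneg (Real.sin (p 2)); linarith
    have h2 : |Real.sin (p 2)| < δ := by
      have := abs_nonneg (Real.sin (p 0)); have := abs_nonneg (Real.sin (p 1)); linarith
    have t0 := cos_dist hδ0 h0
    have t1 := cos_dist hδ0 h1
    have t2 := cos_dist hδ0 h2
    set v : ℝ := (if Real.cos (p 0) < 0 then (2:ℝ) else 0)
      + (if Real.cos (p 1) < 0 then (2:ℝ) else 0)
      + (if Real.cos (p 2) < 0 then (2:ℝ) else 0) with hvdef
    have hvcases : v = 0 ∨ v = 2 ∨ v = 4 ∨ v = 6 := by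
      rw [hvdef]
      by_cases hc0 : Real.cos (p 0) < 0 <;> by_cases hc1 : Real.cos (p 1) < 0 <;>
        by_cases hc2 : Real.cos (p 2) < 0 <;> simp [hc0, hc1, hc2] <;> norm_num
    have hdist : |e3 p - v| ≤ 3 * δ^2 := by
      have he : e3 p = (1 - Real.cos (p 0)) + (1 - Real.cos (p 1)) + (1 - Real.cos (p 2)) := by
        rw [e3, Fin.sum_univ_three]
      rw [he, hvdef]
      have hre : (1 - Real.cos (p 0)) + (1 - Real.cos (p 1)) + (1 - Real.cos (p 2))
          - ((if Real.cos (p 0) < 0 then (2:ℝ) else 0) + (if Real.cos (p 1) < 0 then (2:ℝ) else 0)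
            + (if Real.cos (p 2) < 0 then (2:ℝ) else 0))
          = ((1 - Real.cos (p 0)) - (if Real.cos (p 0) < 0 then (2:ℝ) else 0))
            + ((1 - Real.cos (p 1)) - (if Real.cos (p 1) < 0 then (2:ℝ) else 0))
            + ((1 - Real.cos (p 2)) - (if Real.cos (p 2) < 0 then (2:ℝ) else 0)) := by ring
      rw [hre]
      calc |_ + _ + _| ≤ _ := abs_add_three _ _ _
        _ ≤ δ^2 + δ^2 + δ^2 := by gcongr
        _ = 3 * δ^2 := by ring
    have htri : tri (e3 p) ≤ Λ / 3 := by
      calc tri (e3 p) ≤ |e3 p - v| := tri_le_abs hvcases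
        _ ≤ 3 * δ^2 := hdist
        _ = Λ / 3 := by rw [hδsq]; ring
    rw [hsupp _ htri]
    rw [zero_div]
    positivity




lemma T3_pi : T3 = Set.pi Set.univ (fun _ : Fin 3 => Set.Icc (-π) π) := by
  ext p
  rw [Set.mem_univ_pi]
  simp [T3, abs_le]

lemma T3_cpt : IsCompact T3 := by
  rw [T3_pi]; exact isCompact_univ_pi (fun i => isCompact_Icc)

lemma e3_cont : Continuous e3 := by
  apply continuous_finset_sum
  intro i _
  exact continuous_const.sub (Real.continuous_cos.comp (continuous_apply i))

lemma sin_abs_cont (j : Fin 3) : Continuous fun p : Fin 3 → ℝ => |Real.sin (p j)| :=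
  continuous_abs.comp (Real.continuous_sin.comp (continuous_apply j))

lemma dnm_cont (hη : 0 < η) : Continuous (dnm α η) := by
  have : dnm α η = fun p => Df α η (e3 p) := funext (dnm_eq_Df hη)
  rw [this]
  exact (Df_cont hη).comp e3_cont

lemma dnm_pos (hη : 0 < η) (p : Fin 3 → ℝ) : 0 < dnm α η p := by
  rw [dnm_eq_Df hη]; exact Df_pos hη _

lemma vol_Icc : (volume (Set.Icc (-π) π)).toReal = 2*π := by
  rw [Real.volume_Icc, ENNReal.toReal_ofReal (by linarith [Real.pi_pos])]
  ring

lemma setIcc_boundR {g : ℝ → ℝ} {M : ℝ} (hg : ∀ y ∈ Set.Icc (-π) π, |g y| ≤ M) :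
    |∫ y in Set.Icc (-π) π, g y| ≤ 2*π*M := by
  have h := norm_setIntegral_le_of_norm_le_const (μ := volume) (s := Set.Icc (-π) π)
    (f := g) (C := M) measure_Icc_lt_top (fun x hx => hg x hx)
  rw [measureReal_def, vol_Icc] at h
  calc |∫ y in Set.Icc (-π) π, g y| = ‖∫ y in Set.Icc (-π) π, g y‖ := (Real.norm_eq_abs _).symm
    _ ≤ M * (2*π) := h
    _ = 2*π*M := by ring

lemma setIcc_boundC {g : ℝ → ℂ} {M : ℝ} (hg : ∀ y ∈ Set.Icc (-π) π, ‖g y‖ ≤ M) :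
    ‖∫ y in Set.Icc (-π) π, g y‖ ≤ 2*π*M := by
  have h := norm_setIntegral_le_of_norm_le_const (μ := volume) (s := Set.Icc (-π) π)
    (f := g) (C := M) measure_Icc_lt_top (fun x hx => hg x hx)
  rw [measureReal_def, vol_Icc] at h
  linarith

lemma Icc_intEq {E : Type*} [NormedAddCommGroup E] [NormedSpace ℝ E] (g : ℝ → E) :
    ∫ z in Set.Icc (-π) π, g z = ∫ z in (-π)..π, g z := by
  rw [intervalIntegral.integral_of_le (by linarith [Real.pi_pos])]
  exact integral_Icc_eq_integral_Ioc

/-- The L¹ (log) bound. -/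
lemma bound_log {Λ : ℝ} (hΛ0 : 0 < Λ) (hη : 0 < η) (hη2 : η ≤ 1/2)
    (hr : ∀ t, χ t ∈ Set.Icc (0:ℝ) 1) (hχ : ContDiff ℝ (⊤ : ℕ∞) χ)
    (hsupp : ∀ t : ℝ, tri t ≤ Λ / 3 → χ t = 0) (ξ : Fin 3 → ℝ) :
    ‖Iosc χ α η ξ‖ ≤ (864 * π^2 / Real.sqrt Λ) * |Real.log η| := by
  have hcont1 : Continuous fun p => χ (e3 p) / dnm α η p :=
    (hχ.continuous.comp e3_cont).div (dnm_cont hη) (fun p => (dnm_pos hη p).ne')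
  have hcont2 : Continuous fun p : Fin 3 → ℝ =>
      (|Real.sin (p 0)| + |Real.sin (p 1)| + |Real.sin (p 2)|) / dnm α η p := by
    apply Continuous.div (((sin_abs_cont 0).add (sin_abs_cont 1)).add (sin_abs_cont 2))
      (dnm_cont hη) (fun p => (dnm_pos hη p).ne')
  -- step 1: abs of integral ≤ integral of χ/dnm
  have step1 : ‖Iosc χ α η ξ‖ ≤ ∫ p in T3, χ (e3 p) / dnm α η p := by
    rw [Iosc]
    have h1 : ‖∫ p in T3, Complex.exp (Complex.I * ((∑ i, p i * ξ i : ℝ) : ℂ))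
        * ((χ (e3 p) / dnm α η p : ℝ) : ℂ)‖
        ≤ ∫ p in T3, ‖Complex.exp (Complex.I * ((∑ i, p i * ξ i : ℝ) : ℂ))
        * ((χ (e3 p) / dnm α η p : ℝ) : ℂ)‖ := norm_integral_le_integral_norm _
    have h2 : (∫ p in T3, ‖Complex.exp (Complex.I * ((∑ i, p i * ξ i : ℝ) : ℂ))
        * ((χ (e3 p) / dnm α η p : ℝ) : ℂ)‖) = ∫ p in T3, χ (e3 p) / dnm α η p := by
      apply setIntegral_congr_fun measurableT3
      intro p _
      show ‖_ * _‖ = _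
      rw [norm_mul]
      have he : ‖Complex.exp (Complex.I * ((∑ i, p i * ξ i : ℝ) : ℂ))‖ = 1 := by
        rw [Complex.norm_exp]
        have : (Complex.I * ((∑ i, p i * ξ i : ℝ) : ℂ)).re = 0 := by simp
        rw [this, Real.exp_zero]
      rw [he, one_mul, Complex.norm_real, Real.norm_eq_abs,
        abs_of_nonneg (div_nonneg (hr _).1 (dnm_pos hη p).le)]
    calc ‖_‖ = ‖_‖ := rfl
      _ ≤ _ := h1
      _ = _ := h2
  -- step 2: support bound
  have hint1 : IntegrableOn (fun p => χ (e3 p) / dnm α η p) T3 volume :=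
    hcont1.locallyIntegrable.integrableOn_isCompact T3_cpt
  have hint2 : IntegrableOn (fun p : Fin 3 → ℝ =>
      (|Real.sin (p 0)| + |Real.sin (p 1)| + |Real.sin (p 2)|) / dnm α η p) T3 volume :=
    hcont2.locallyIntegrable.integrableOn_isCompact T3_cpt
  have step2 : (∫ p in T3, χ (e3 p) / dnm α η p)
      ≤ (3 / Real.sqrt Λ) * ∫ p in T3,
        (|Real.sin (p 0)| + |Real.sin (p 1)| + |Real.sin (p 2)|) / dnm α η p := by
    rw [← MeasureTheory.integral_const_mul]
    apply setIntegral_mono_on hint1 (hint2.const_mul _) measurableT3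
    intro p _
    exact support_bound hΛ0 hη hr hsupp p
  -- step 3: split and permute
  have hcontj : ∀ j : Fin 3, Continuous fun p : Fin 3 → ℝ => |Real.sin (p j)| / dnm α η p := by
    intro j
    apply Continuous.div (sin_abs_cont j) (dnm_cont hη) (fun p => (dnm_pos hη p).ne')
  have hintj : ∀ j : Fin 3, IntegrableOn
      (fun p : Fin 3 → ℝ => |Real.sin (p j)| / dnm α η p) T3 volume :=
    fun j => (hcontj j).locallyIntegrable.integrableOn_isCompact T3_cpt
  have h01 : IntegrableOn (fun p : Fin 3 → ℝ => |Real.sin (p 0)| / dnm α η p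
      + |Real.sin (p 1)| / dnm α η p) T3 volume := (hintj 0).add (hintj 1)
  have hsplit : (∫ p in T3,
      (|Real.sin (p 0)| + |Real.sin (p 1)| + |Real.sin (p 2)|) / dnm α η p)
      = ((∫ p in T3, |Real.sin (p 0)| / dnm α η p)
        + (∫ p in T3, |Real.sin (p 1)| / dnm α η p))
        + (∫ p in T3, |Real.sin (p 2)| / dnm α η p) := by
    have e0 : (∫ p in T3, (|Real.sin (p 0)| + |Real.sin (p 1)| + |Real.sin (p 2)|) / dnm α η p)
        = ∫ p in T3, (|Real.sin (p 0)| / dnm α η p + |Real.sin (p 1)| / dnm α η p)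
            + |Real.sin (p 2)| / dnm α η p := by
      apply setIntegral_congr_fun measurableT3
      intro p _
      show _ / _ = _
      rw [add_div, add_div]
    rw [e0, integral_add h01 (hintj 2), integral_add (hintj 0) (hintj 1)]
  have hperm : ∀ j : Fin 3, (∫ p in T3, |Real.sin (p j)| / dnm α η p)
      = ∫ p in T3, |Real.sin (p 2)| / dnm α η p := by
    intro j
    set σ : Equiv.Perm (Fin 3) := Equiv.swap j 2 with hσdef
    have key := perm_T3 σ (fun p => |Real.sin (p 2)| / dnm α η p)
    rw [← key]
    apply setIntegral_congr_fun measurableT3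
    intro p _
    show |Real.sin (p j)| / dnm α η p = |Real.sin (p (σ 2))| / dnm α η (fun i => p (σ i))
    have hdnmp : dnm α η (fun i => p (σ i)) = dnm α η p := by
      rw [dnm, dnm, e3_perm]
    rw [hdnmp, hσdef, Equiv.swap_apply_right]
  -- step 4: iterated bound for N2
  have hN2 : (∫ p in T3, |Real.sin (p 2)| / dnm α η p) ≤ 96 * π^2 * |Real.log η| := by
    have hrep : (∫ p in T3, |Real.sin (p 2)| / dnm α η p)
        = ∫ x in Set.Icc (-π) π, ∫ y in Set.Icc (-π) π, ∫ z in Set.Icc (-π) π,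
            |Real.sin z| / Df α η ((1 - Real.cos x) + (1 - Real.cos y) + (1 - Real.cos z)) := by
      have hH : Continuous fun q : ℝ × ℝ × ℝ =>
          |Real.sin q.2.2| / Df α η ((1 - Real.cos q.1) + (1 - Real.cos q.2.1)
            + (1 - Real.cos q.2.2)) := by
        have hc1 : Continuous fun q : ℝ × ℝ × ℝ => |Real.sin q.2.2| :=
          continuous_abs.comp (Real.continuous_sin.comp (continuous_snd.comp continuous_snd))
        have hc2 : Continuous fun q : ℝ × ℝ × ℝ =>
            (1 - Real.cos q.1) + (1 - Real.cos q.2.1) + (1 - Real.cos q.2.2) := by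
          apply Continuous.add
          apply Continuous.add
          · exact continuous_const.sub (Real.continuous_cos.comp continuous_fst)
          · exact continuous_const.sub
              (Real.continuous_cos.comp (continuous_fst.comp continuous_snd))
          · exact continuous_const.sub
              (Real.continuous_cos.comp (continuous_snd.comp continuous_snd))
        apply Continuous.div hc1 ((Df_cont hη).comp hc2) (fun q => (Df_pos hη _).ne')
      have := torus_iterated (fun x y z =>
        |Real.sin z| / Df α η ((1 - Real.cos x) + (1 - Real.cos y) + (1 - Real.cos z))) hH
      rw [← this]
      apply setIntegral_congr_fun measurableT3
      intro p _
      show |Real.sin (p 2)| / dnm α η p = _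
      rw [dnm_eq_Df hη, e3, Fin.sum_univ_three]
    rw [hrep]
    have hinner : ∀ x y : ℝ, (∫ z in Set.Icc (-π) π,
        |Real.sin z| / Df α η ((1 - Real.cos x) + (1 - Real.cos y) + (1 - Real.cos z)))
        ≤ 24 * |Real.log η| := by
      intro x y
      rw [Icc_intEq]
      have heq : (∫ z in (-π)..π,
          |Real.sin z| / Df α η ((1 - Real.cos x) + (1 - Real.cos y) + (1 - Real.cos z)))
          = ∫ z in (-π)..π, |Real.sin z|
            * (Df α η (((1 - Real.cos x) + (1 - Real.cos y)) + (1 - Real.cos z)))⁻¹ := by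
        apply intervalIntegral.integral_congr
        intro z _
        show _ / _ = _
        rw [div_eq_mul_inv]
      rw [heq]
      exact inner_log hη hη2 ((1 - Real.cos x) + (1 - Real.cos y))
    have hinner_nonneg : ∀ x y : ℝ, 0 ≤ ∫ z in Set.Icc (-π) π,
        |Real.sin z| / Df α η ((1 - Real.cos x) + (1 - Real.cos y) + (1 - Real.cos z)) := by
      intro x y
      apply setIntegral_nonneg measurableSet_Icc
      intro z _
      exact div_nonneg (abs_nonneg _) (Df_pos hη _).le
    have hmid : ∀ x : ℝ, |∫ y in Set.Icc (-π) π, ∫ z in Set.Icc (-π) π,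
        |Real.sin z| / Df α η ((1 - Real.cos x) + (1 - Real.cos y) + (1 - Real.cos z))|
        ≤ 2*π*(24 * |Real.log η|) := by
      intro x
      apply setIcc_boundR
      intro y _
      rw [abs_of_nonneg (hinner_nonneg x y)]
      exact hinner x y
    have houter : |∫ x in Set.Icc (-π) π, ∫ y in Set.Icc (-π) π, ∫ z in Set.Icc (-π) π,
        |Real.sin z| / Df α η ((1 - Real.cos x) + (1 - Real.cos y) + (1 - Real.cos z))|
        ≤ 2*π*(2*π*(24 * |Real.log η|)) := by
      apply setIcc_boundR
      intro x _
      exact hmid x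
    calc (∫ x in Set.Icc (-π) π, ∫ y in Set.Icc (-π) π, ∫ z in Set.Icc (-π) π,
        |Real.sin z| / Df α η ((1 - Real.cos x) + (1 - Real.cos y) + (1 - Real.cos z)))
        ≤ |∫ x in Set.Icc (-π) π, ∫ y in Set.Icc (-π) π, ∫ z in Set.Icc (-π) π,
        |Real.sin z| / Df α η ((1 - Real.cos x) + (1 - Real.cos y) + (1 - Real.cos z))| :=
          le_abs_self _
      _ ≤ 2*π*(2*π*(24 * |Real.log η|)) := houter
      _ = 96 * π^2 * |Real.log η| := by ring
  -- combine
  have hsqrtΛ : 0 < Real.sqrt Λ := Real.sqrt_pos.mpr hΛ0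
  calc ‖Iosc χ α η ξ‖ ≤ ∫ p in T3, χ (e3 p) / dnm α η p := step1
    _ ≤ (3 / Real.sqrt Λ) * ∫ p in T3,
        (|Real.sin (p 0)| + |Real.sin (p 1)| + |Real.sin (p 2)|) / dnm α η p := step2
    _ = (3 / Real.sqrt Λ) * ((∫ p in T3, |Real.sin (p 0)| / dnm α η p)
        + (∫ p in T3, |Real.sin (p 1)| / dnm α η p)
        + (∫ p in T3, |Real.sin (p 2)| / dnm α η p)) := by rw [hsplit]
    _ = (3 / Real.sqrt Λ) * (3 * ∫ p in T3, |Real.sin (p 2)| / dnm α η p) := by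
        rw [hperm 0, hperm 1]; ring
    _ ≤ (3 / Real.sqrt Λ) * (3 * (96 * π^2 * |Real.log η|)) := by
        apply mul_le_mul_of_nonneg_left _ (by positivity)
        linarith
    _ = (864 * π^2 / Real.sqrt Λ) * |Real.log η| := by
        field_simp
        ring




/-- The decay bound. -/
lemma bound_decay (hη : 0 < η) (hχ : ContDiff ℝ (⊤ : ℕ∞) χ)
    (hr : ∀ t, χ t ∈ Set.Icc (0:ℝ) 1)
    {K : ℝ} (hd1 : ∀ t, |deriv χ t| ≤ K)
    (ξ : Fin 3 → ℝ) (hb : ξ 2 ≠ 0) :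
    ‖Iosc χ α η ξ‖ ≤ (4*π^2*(2 + 4*K + 2*π)) / (η * |ξ 2|) := by
  have hK : 0 ≤ K := (abs_nonneg _).trans (hd1 0)
  set FF : ℝ → ℝ → ℝ → ℂ := fun x y z =>
    Complex.exp (Complex.I * ((x * ξ 0 + y * ξ 1 + z * ξ 2 : ℝ) : ℂ))
      * ((phi χ α η ((1 - Real.cos x) + (1 - Real.cos y) + (1 - Real.cos z)) : ℝ) : ℂ)
    with hFFdef
  have hc2 : Continuous fun q : ℝ × ℝ × ℝ =>
      (1 - Real.cos q.1) + (1 - Real.cos q.2.1) + (1 - Real.cos q.2.2) := by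
    apply Continuous.add
    apply Continuous.add
    · exact continuous_const.sub (Real.continuous_cos.comp continuous_fst)
    · exact continuous_const.sub
        (Real.continuous_cos.comp (continuous_fst.comp continuous_snd))
    · exact continuous_const.sub
        (Real.continuous_cos.comp (continuous_snd.comp continuous_snd))
  have hFFc : Continuous fun q : ℝ × ℝ × ℝ => FF q.1 q.2.1 q.2.2 := by
    apply Continuous.mul
    · apply Complex.continuous_exp.comp
      apply continuous_const.mul
      apply Complex.continuous_ofReal.comp
      apply Continuous.add
      apply Continuous.add
      · exact continuous_fst.mul continuous_const
      · exact (continuous_fst.comp continuous_snd).mul continuous_const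
      · exact (continuous_snd.comp continuous_snd).mul continuous_const
    · exact Complex.continuous_ofReal.comp ((phi_cont hη hχ).comp hc2)
  have hrep : Iosc χ α η ξ = ∫ x in Set.Icc (-π) π, ∫ y in Set.Icc (-π) π,
      ∫ z in Set.Icc (-π) π, FF x y z := by
    rw [Iosc, ← torus_iterated (fun x y z => FF x y z) hFFc]
    apply setIntegral_congr_fun measurableT3
    intro p _
    show Complex.exp (Complex.I * ((∑ i, p i * ξ i : ℝ) : ℂ))
        * ((χ (e3 p) / dnm α η p : ℝ) : ℂ) = FF (p 0) (p 1) (p 2)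
    rw [hFFdef]
    have h1 : (∑ i, p i * ξ i) = p 0 * ξ 0 + p 1 * ξ 1 + p 2 * ξ 2 := Fin.sum_univ_three _
    have h2 : χ (e3 p) / dnm α η p
        = phi χ α η ((1 - Real.cos (p 0)) + (1 - Real.cos (p 1)) + (1 - Real.cos (p 2))) := by
      rw [dnm_eq_Df hη, phi, e3, Fin.sum_univ_three]
    rw [h1, h2]
  have hM : 0 ≤ (2*η⁻¹ + (4*K*η⁻¹ + 2*π*η⁻¹)) / |ξ 2| := by
    apply div_nonneg _ (abs_nonneg _)
    have := Real.pi_pos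
    positivity
  have hinner : ∀ x y : ℝ, ‖∫ z in Set.Icc (-π) π, FF x y z‖
      ≤ (2*η⁻¹ + (4*K*η⁻¹ + 2*π*η⁻¹)) / |ξ 2| := by
    intro x y
    rw [Icc_intEq]
    set c₀ : ℝ := (1 - Real.cos x) + (1 - Real.cos y) with hc₀def
    have hfac : ∀ z : ℝ, FF x y z
        = Complex.exp (Complex.I * ((x * ξ 0 + y * ξ 1 : ℝ) : ℂ))
          * (Complex.exp (Complex.I * z * (ξ 2))
            * ((phi χ α η (c₀ + (1 - Real.cos z)) : ℝ) : ℂ)) := by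
      intro z
      rw [hFFdef]
      show Complex.exp _ * _ = _
      rw [← mul_assoc, ← Complex.exp_add]
      congr 2
      push_cast
      ring
    have heq : (∫ z in (-π)..π, FF x y z)
        = Complex.exp (Complex.I * ((x * ξ 0 + y * ξ 1 : ℝ) : ℂ))
          * ∫ z in (-π)..π, Complex.exp (Complex.I * z * (ξ 2))
            * ((phi χ α η (c₀ + (1 - Real.cos z)) : ℝ) : ℂ) := by
      rw [← intervalIntegral.integral_const_mul]
      exact intervalIntegral.integral_congr (fun z _ => hfac z)
    rw [heq, norm_mul]
    have habse : ‖Complex.exp (Complex.I * ((x * ξ 0 + y * ξ 1 : ℝ) : ℂ))‖ = 1 := by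
      rw [Complex.norm_exp]
      have : (Complex.I * ((x * ξ 0 + y * ξ 1 : ℝ) : ℂ)).re = 0 := by simp
      rw [this, Real.exp_zero]
    rw [habse, one_mul]
    exact inner_decay hη hχ hr hd1 c₀ (ξ 2) hb
  have hmid : ∀ x : ℝ, ‖∫ y in Set.Icc (-π) π, ∫ z in Set.Icc (-π) π, FF x y z‖
      ≤ 2*π*((2*η⁻¹ + (4*K*η⁻¹ + 2*π*η⁻¹)) / |ξ 2|) := by
    intro x
    apply setIcc_boundC
    intro y _
    exact hinner x y
  have houter : ‖∫ x in Set.Icc (-π) π, ∫ y in Set.Icc (-π) π,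
      ∫ z in Set.Icc (-π) π, FF x y z‖
      ≤ 2*π*(2*π*((2*η⁻¹ + (4*K*η⁻¹ + 2*π*η⁻¹)) / |ξ 2|)) := by
    apply setIcc_boundC
    intro x _
    exact hmid x
  rw [hrep]
  calc ‖_‖ = ‖_‖ := rfl
    _ ≤ 2*π*(2*π*((2*η⁻¹ + (4*K*η⁻¹ + 2*π*η⁻¹)) / |ξ 2|)) := houter
    _ = (4*π^2*(2 + 4*K + 2*π)) / (η * |ξ 2|) := by
        rw [eq_div_iff (by positivity : η * |ξ 2| ≠ 0)]
        field_simp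
        ring



lemma jap_ge_one (x : ℝ) : 1 ≤ jap x := by
  rw [jap]
  calc (1:ℝ) = Real.sqrt 1 := (Real.sqrt_one).symm
    _ ≤ Real.sqrt (1 + x^2) := Real.sqrt_le_sqrt (by nlinarith [sq_nonneg x])

lemma jap_pos (x : ℝ) : 0 < jap x := lt_of_lt_of_le one_pos (jap_ge_one x)

lemma jap_le (x : ℝ) (hx : 0 ≤ x) : jap x ≤ 1 + x := by
  rw [jap]
  rw [show (1:ℝ) + x = Real.sqrt ((1+x)^2) by rw [Real.sqrt_sq (by linarith)]]
  apply Real.sqrt_le_sqrt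
  nlinarith

lemma enorm3_le {ξ : Fin 3 → ℝ} (hs0 : |ξ 0| ≤ |ξ 2|) (hs1 : |ξ 1| ≤ |ξ 2|) :
    enorm3 ξ ≤ 2 * |ξ 2| := by
  rw [enorm3, Fin.sum_univ_three]
  rw [show (2:ℝ) * |ξ 2| = Real.sqrt ((2 * |ξ 2|)^2) by
    rw [Real.sqrt_sq (by positivity)]]
  apply Real.sqrt_le_sqrt
  have h0 : ξ 0^2 ≤ ξ 2^2 := by
    rw [← sq_abs (ξ 0), ← sq_abs (ξ 2)]
    nlinarith [abs_nonneg (ξ 0), abs_nonneg (ξ 2)]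
  have h1 : ξ 1^2 ≤ ξ 2^2 := by
    rw [← sq_abs (ξ 1), ← sq_abs (ξ 2)]
    nlinarith [abs_nonneg (ξ 1), abs_nonneg (ξ 2)]
  have h2 : (2 * |ξ 2|)^2 = 4 * ξ 2^2 := by
    rw [mul_pow, sq_abs]; norm_num
  nlinarith [sq_nonneg (ξ 2)]

lemma enorm3_zero {ξ : Fin 3 → ℝ} (hs0 : |ξ 0| ≤ |ξ 2|) (hs1 : |ξ 1| ≤ |ξ 2|)
    (hz : ξ 2 = 0) : enorm3 ξ = 0 := by
  have h0 : ξ 0 = 0 := by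
    have := hs0; rw [hz] at this; simpa using this
  have h1 : ξ 1 = 0 := by
    have := hs1; rw [hz] at this; simpa using this
  rw [enorm3, Fin.sum_univ_three, h0, h1, hz]
  norm_num

lemma choose_perm (ξ : Fin 3 → ℝ) : ∃ σ : Equiv.Perm (Fin 3),
    |ξ (σ 0)| ≤ |ξ (σ 2)| ∧ |ξ (σ 1)| ≤ |ξ (σ 2)| := by
  by_cases h02 : |ξ 0| ≤ |ξ 2|
  · by_cases h12 : |ξ 1| ≤ |ξ 2|
    · exact ⟨Equiv.refl _, h02, h12⟩
    · push_neg at h12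
      refine ⟨Equiv.swap 1 2, ?_, ?_⟩
      · rw [Equiv.swap_apply_of_ne_of_ne (by decide) (by decide), Equiv.swap_apply_right]
        linarith
      · rw [Equiv.swap_apply_left, Equiv.swap_apply_right]
        linarith
  · push_neg at h02
    by_cases h01 : |ξ 1| ≤ |ξ 0|
    · refine ⟨Equiv.swap 0 2, ?_, ?_⟩
      · rw [Equiv.swap_apply_left, Equiv.swap_apply_right]
        linarith
      · rw [Equiv.swap_apply_of_ne_of_ne (by decide) (by decide), Equiv.swap_apply_right]
        linarith
    · push_neg at h01
      refine ⟨Equiv.swap 1 2, ?_, ?_⟩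
      · rw [Equiv.swap_apply_of_ne_of_ne (by decide) (by decide), Equiv.swap_apply_right]
        linarith
      · rw [Equiv.swap_apply_left, Equiv.swap_apply_right]
        linarith

end St17

/-- For a smooth cutoff `χ` vanishing where `|||t||| ≤ Λ/3`, with derivative bounds
`|χ⁽ᵏ⁾| ≤ C_k Λ^{−k}`, one has `|I(ξ)| ≤ C_Λ |log η| / ⟨η|ξ|⟩`, with `C_Λ` depending
only on `Λ` and the constants `C_k`. -/

theorem stmt17 (Λ : ℝ) (hΛ0 : 0 < Λ) (hΛ : Λ < 1/2) (Cd : ℕ → ℝ) :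
    ∃ C : ℝ, 0 < C ∧ ∀ χ : ℝ → ℝ,
      (∀ t : ℝ, χ t ∈ Set.Icc (0:ℝ) 1) →
      ContDiff ℝ (⊤ : ℕ∞) χ →
      (∀ t : ℝ, tri t ≤ Λ / 3 → χ t = 0) →
      (∀ k : ℕ, ∀ t : ℝ, |iteratedDeriv k χ t| ≤ Cd k / Λ ^ k) →
      ∀ η : ℝ, 0 < η → η ≤ 1/2 → ∀ α : ℝ, ∀ ξ : Fin 3 → ℝ,
        ‖Iosc χ α η ξ‖ ≤ C * |Real.log η| / jap (η * enorm3 ξ) := by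
  have hlog2 : (0:ℝ) < Real.log 2 := Real.log_pos (by norm_num)
  set K : ℝ := max (Cd 1 / Λ) 0 with hKdef
  have hK0 : 0 ≤ K := le_max_right _ _
  set CA : ℝ := 864 * π^2 / Real.sqrt Λ with hCAdef
  set CB : ℝ := 8 * π^2 * (2 + 4*K + 2*π) / Real.log 2 with hCBdef
  have hCA0 : 0 < CA := by
    rw [hCAdef]
    have := Real.pi_pos
    positivity
  have hCB0 : 0 ≤ CB := by
    rw [hCBdef]
    apply div_nonneg _ hlog2.le
    have := Real.pi_pos
    positivity
  refine ⟨CA + CB + 1, by linarith, ?_⟩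
  intro χ hr hχ hsupp hder η hη hη2 α ξ
  have hd1 : ∀ t, |deriv χ t| ≤ K := by
    intro t
    have := hder 1 t
    rw [iteratedDeriv_one, pow_one] at this
    exact this.trans (le_max_left _ _)
  obtain ⟨σ, hs0, hs1⟩ := St17.choose_perm ξ
  set ξ' : Fin 3 → ℝ := fun i => ξ (σ i) with hξ'def
  have hIeq : Iosc χ α η ξ = Iosc χ α η ξ' := St17.Iosc_perm χ α η ξ σ
  have hEeq : enorm3 ξ = enorm3 ξ' := (St17.enorm3_perm σ ξ).symm
  rw [hIeq, hEeq]
  have hjpos : 0 < jap (η * enorm3 ξ') := St17.jap_pos _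
  have hlogge : Real.log 2 ≤ |Real.log η| := St17.log_ge hη hη2
  have hlogpos : 0 ≤ |Real.log η| := abs_nonneg _
  rw [le_div_iff₀ hjpos]
  have hA := St17.bound_log (α := α) hΛ0 hη hη2 hr hχ hsupp ξ'
  have habs0 : 0 ≤ ‖Iosc χ α η ξ'‖ := norm_nonneg _
  -- main intermediate bound
  have hmain : ‖Iosc χ α η ξ'‖ * jap (η * enorm3 ξ')
      ≤ CA * |Real.log η| + 8 * π^2 * (2 + 4*K + 2*π) := by
    by_cases hz : ξ' 2 = 0
    · have hE0 : enorm3 ξ' = 0 := St17.enorm3_zero (ξ := ξ') hs0 hs1 hz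
      rw [hE0, mul_zero]
      have hjap1 : jap 0 = 1 := by
        rw [jap]; norm_num
      rw [hjap1, mul_one]
      have hpos2 : 0 ≤ 8 * π^2 * (2 + 4*K + 2*π) := by
        have := Real.pi_pos
        positivity
      calc ‖Iosc χ α η ξ'‖ ≤ CA * |Real.log η| := hA
        _ ≤ CA * |Real.log η| + 8 * π^2 * (2 + 4*K + 2*π) := by linarith
    · have hB := St17.bound_decay (α := α) hη hχ hr hd1 ξ' hz
      have hξ2pos : 0 < |ξ' 2| := abs_pos.mpr hz
      have hjle : jap (η * enorm3 ξ') ≤ 1 + 2 * (η * |ξ' 2|) := by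
        have h1 : jap (η * enorm3 ξ') ≤ 1 + η * enorm3 ξ' := by
          apply St17.jap_le
          apply mul_nonneg hη.le
          rw [enorm3]; exact Real.sqrt_nonneg _
        have h2 : η * enorm3 ξ' ≤ 2 * (η * |ξ' 2|) := by
          have := St17.enorm3_le (ξ := ξ') hs0 hs1
          nlinarith
        linarith
      have hjap0 : 0 ≤ jap (η * enorm3 ξ') := hjpos.le
      have step : ‖Iosc χ α η ξ'‖ * jap (η * enorm3 ξ')
          ≤ ‖Iosc χ α η ξ'‖ * (1 + 2 * (η * |ξ' 2|)) :=
        mul_le_mul_of_nonneg_left hjle habs0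
      have step2 : ‖Iosc χ α η ξ'‖ * (1 + 2 * (η * |ξ' 2|))
          = ‖Iosc χ α η ξ'‖
            + ‖Iosc χ α η ξ'‖ * (2 * (η * |ξ' 2|)) := by ring
      have step3 : ‖Iosc χ α η ξ'‖ * (2 * (η * |ξ' 2|))
          ≤ (4*π^2*(2 + 4*K + 2*π)) / (η * |ξ' 2|) * (2 * (η * |ξ' 2|)) := by
        apply mul_le_mul_of_nonneg_right hB (by positivity)
      have step4 : (4*π^2*(2 + 4*K + 2*π)) / (η * |ξ' 2|) * (2 * (η * |ξ' 2|))
          = 8 * π^2 * (2 + 4*K + 2*π) := by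
        field_simp
        ring
      calc ‖Iosc χ α η ξ'‖ * jap (η * enorm3 ξ')
          ≤ ‖Iosc χ α η ξ'‖ * (1 + 2 * (η * |ξ' 2|)) := step
        _ = _ := step2
        _ ≤ CA * |Real.log η| + (4*π^2*(2 + 4*K + 2*π)) / (η * |ξ' 2|)
            * (2 * (η * |ξ' 2|)) := add_le_add hA step3
        _ = CA * |Real.log η| + 8 * π^2 * (2 + 4*K + 2*π) := by rw [step4]
  have hfinal : CA * |Real.log η| + 8 * π^2 * (2 + 4*K + 2*π)
      ≤ (CA + CB + 1) * |Real.log η| := by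
    have h1 : 8 * π^2 * (2 + 4*K + 2*π) = CB * Real.log 2 := by
      rw [hCBdef]
      field_simp
    have h2 : CB * Real.log 2 ≤ CB * |Real.log η| :=
      mul_le_mul_of_nonneg_left hlogge hCB0
    nlinarith
  linarith
end
end
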